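/- arXiv:1806.03297 — 8 statements merged into one kernel-verified Lean document; each statement's English description precedes it below -/
import Mathlib

section
/- Let A and B be Archimedean semiprime f-algebras with point separating order duals, and let T : A → B be an order bounded linear operator. If T vanishes on A ∩ Z(A) — that is, T(a) = 0 for every a ∈ A for which there exists a real number λ ≥ 0 with |ab| ≤ λ|b| for all b ∈ A — then T is identically zero on A. -/
/-! For `0 ≤ a` and `n : ℕ` split `a = a ⊓ n • 1 + d` with `d = (a - n • 1)⁺`. The first summand is
dominated by `n • 1`, hence lies in `A ∩ Z(A)` and is killed by `T`. The second is disjoint from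
`(a - n • 1)⁻`, so in an `f`-algebra it annihilates it, which gives `n • d ≤ d * a ≤ a * a`. Hence
`|n • T a| = |T (n • d)|` stays below the order bound of `T` on `[-a * a, a * a]` for every `n`,
and `T a = 0` because `B` is Archimedean. Positive and negative parts reduce the general case to
`0 ≤ a`. -/

/-- The `f`-ring axiom alone; the lattice-ordered ring structure is assumed separately. -/
def IsFRing (A : Type*) [Ring A] [Lattice A] : Prop :=
  ∀ x y z : A, 0 ≤ z → x ⊓ y = 0 → x * z ⊓ y = 0 ∧ z * x ⊓ y = 0

section LatticeOrderedRing

variable {A : Type*} [Ring A] [Lattice A]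

theorem IsFRing.mul_eq_zero_of_inf_eq_zero (hf : IsFRing A) {x y : A} (hx : 0 ≤ x)
    (hy : 0 ≤ y) (h : x ⊓ y = 0) : x * y = 0 := by
  have hxy : y ⊓ x * y = 0 := by rw [inf_comm]; exact (hf x y y hy h).1
  simpa using (hf y (x * y) x hx hxy).2

theorem IsFRing.mul_self_nonneg [AddLeftMono A] (hmul : ∀ x y : A, 0 ≤ x → 0 ≤ y → 0 ≤ x * y)
    (hf : IsFRing A) (x : A) : 0 ≤ x * x := by
  have hpn : x⁺ * x⁻ = 0 :=
    hf.mul_eq_zero_of_inf_eq_zero (posPart_nonneg x) (negPart_nonneg x)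
      (posPart_inf_negPart_eq_zero x)
  have hnp : x⁻ * x⁺ = 0 :=
    hf.mul_eq_zero_of_inf_eq_zero (negPart_nonneg x) (posPart_nonneg x)
      (by rw [inf_comm, posPart_inf_negPart_eq_zero])
  calc 0 ≤ x⁺ * x⁺ + x⁻ * x⁻ :=
        add_nonneg (hmul _ _ (posPart_nonneg x) (posPart_nonneg x))
          (hmul _ _ (negPart_nonneg x) (negPart_nonneg x))
    _ = x * x := by
        conv_rhs => rw [← posPart_sub_negPart x]
        rw [sub_mul, mul_sub, mul_sub, hpn, hnp]
        abel

theorem IsFRing.isOrderedRing [AddLeftMono A]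
    (hmul : ∀ x y : A, 0 ≤ x → 0 ≤ y → 0 ≤ x * y) (hf : IsFRing A) : IsOrderedRing A :=
  haveI : IsOrderedAddMonoid A :=
    ⟨fun _ _ h c => add_le_add_left h c, fun _ _ h c => add_le_add_right h c⟩
  haveI : ZeroLEOneClass A := ⟨by simpa using hf.mul_self_nonneg hmul 1⟩
  IsOrderedRing.of_mul_nonneg hmul

variable [IsOrderedRing A]

theorem abs_mul_le_mul_abs {c : A} (hc : 0 ≤ c) (b : A) : |c * b| ≤ c * |b| :=
  abs_le'.2 ⟨mul_le_mul_of_nonneg_left (le_abs_self b) hc,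
    by rw [← mul_neg]; exact mul_le_mul_of_nonneg_left (neg_le_abs b) hc⟩

theorem exists_abs_mul_le_smul_abs_of_le_nsmul_one [Module ℝ A] {c : A} {n : ℕ} (hc : 0 ≤ c)
    (hcn : c ≤ n • 1) : ∃ l : ℝ, 0 ≤ l ∧ ∀ b : A, |c * b| ≤ l • |b| := by
  refine ⟨n, n.cast_nonneg, fun b => ?_⟩
  calc |c * b| ≤ c * |b| := abs_mul_le_mul_abs hc b
    _ ≤ (n • 1) * |b| := mul_le_mul_of_nonneg_right hcn (abs_nonneg b)
    _ = (n : ℝ) • |b| := by rw [smul_one_mul, Nat.cast_smul_eq_nsmul]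

theorem IsFRing.nsmul_posPart_sub_le_mul_self (hf : IsFRing A) {a : A} (ha : 0 ≤ a) (n : ℕ) :
    n • (a - n • 1)⁺ ≤ a * a := by
  set d := (a - n • 1)⁺
  have hd : 0 ≤ d := posPart_nonneg _
  have hdneg : d * (a - n • 1)⁻ = 0 :=
    hf.mul_eq_zero_of_inf_eq_zero hd (negPart_nonneg _) (posPart_inf_negPart_eq_zero _)
  have hda : d ≤ a := by
    rw [← sub_nonneg, ← inf_eq_sub_posPart_sub]
    exact le_inf ha (nsmul_nonneg zero_le_one n)
  have hsq : d * (a - n • 1) = d * d := by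
    conv_lhs => rw [← posPart_sub_negPart (a - n • 1)]
    rw [mul_sub, hdneg, sub_zero]
  calc n • d ≤ d * a := by
        rw [← sub_nonneg, ← mul_smul_one, ← mul_sub, hsq]
        exact mul_nonneg hd hd
    _ ≤ a * a := mul_le_mul_of_nonneg_right hda ha

end LatticeOrderedRing

theorem eq_zero_of_forall_abs_nsmul_le {B : Type*} [AddCommGroup B] [Lattice B] [AddLeftMono B]
    (harch : ∀ x y : B, (∀ n : ℕ, n • x ≤ y) → x ≤ 0) {x y : B} (h : ∀ n : ℕ, |n • x| ≤ y) :
    x = 0 :=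
  le_antisymm (harch x y fun n => (le_abs_self _).trans (h n))
    (neg_nonpos.1 <| harch (-x) y fun n => by rw [smul_neg]; exact (neg_le_abs _).trans (h n))

theorem stmt_0_general
    {A B : Type*}
    [Ring A] [Lattice A] [Algebra ℝ A] [CovariantClass A A (· + ·) (· ≤ ·)]
    -- A is a lattice-ordered algebra
    (hmulA : ∀ x y : A, 0 ≤ x → 0 ≤ y → 0 ≤ x * y)
    -- the f-algebra condition
    (hfA : ∀ x y z : A, 0 ≤ z → x ⊓ y = 0 → (x * z) ⊓ y = 0 ∧ (z * x) ⊓ y = 0)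
    [Ring B] [Lattice B] [Algebra ℝ B] [CovariantClass B B (· + ·) (· ≤ ·)]
    -- B is Archimedean
    (harchB : ∀ x y : B, (∀ n : ℕ, n • x ≤ y) → x ≤ 0)
    (T : A →ₗ[ℝ] B)
    -- T is order bounded
    (hTob : ∀ a : A, 0 ≤ a → ∃ b : B, ∀ x : A, |x| ≤ a → |T x| ≤ b)
    -- T vanishes on A ∩ Z(A)
    (hvan : ∀ a : A, (∃ l : ℝ, 0 ≤ l ∧ ∀ b : A, |a * b| ≤ l • |b|) → T a = 0) :
    ∀ a : A, T a = 0 := by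
  have hf : IsFRing A := hfA
  have := hf.isOrderedRing hmulA
  suffices hpos : ∀ a : A, 0 ≤ a → T a = 0 by
    intro a
    rw [← posPart_sub_negPart a, map_sub, hpos _ (posPart_nonneg a),
      hpos _ (negPart_nonneg a), sub_zero]
  intro a ha
  obtain ⟨b, hb⟩ := hTob (a * a) (mul_nonneg ha ha)
  have htail : ∀ n : ℕ, T a = T (a - n • 1)⁺ := fun n => by
    have hcentre := hvan _ (exists_abs_mul_le_smul_abs_of_le_nsmul_one
      (le_inf ha (nsmul_nonneg zero_le_one n)) (inf_le_right : a ⊓ n • 1 ≤ n • 1))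
    rw [inf_eq_sub_posPart_sub, map_sub, sub_eq_zero] at hcentre
    exact hcentre
  refine eq_zero_of_forall_abs_nsmul_le harchB (y := b) fun n => ?_
  rw [htail n, ← map_nsmul]
  exact hb _ (by
    rw [abs_of_nonneg (nsmul_nonneg (posPart_nonneg _) n)]
    exact hf.nsmul_posPart_sub_le_mul_self ha n)

/-- If an order bounded linear operator `T` between Archimedean semiprime
`f`-algebras with point separating order duals vanishes on `A ∩ Z(A)`,
then `T` is identically zero. -/
theorem stmt_0
    {A B : Type*}
    [Ring A] [Lattice A] [Algebra ℝ A] [CovariantClass A A (· + ·) (· ≤ ·)]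
    -- A is a Riesz space (vector lattice) over ℝ
    (hsmulA : ∀ (r : ℝ) (x : A), 0 ≤ r → 0 ≤ x → 0 ≤ r • x)
    -- A is a lattice-ordered algebra
    (hmulA : ∀ x y : A, 0 ≤ x → 0 ≤ y → 0 ≤ x * y)
    -- the f-algebra condition
    (hfA : ∀ x y z : A, 0 ≤ z → x ⊓ y = 0 → (x * z) ⊓ y = 0 ∧ (z * x) ⊓ y = 0)
    -- A is Archimedean
    (harchA : ∀ x y : A, (∀ n : ℕ, n • x ≤ y) → x ≤ 0)
    -- the order dual of A separates the points of A
    (hsepA : ∀ x : A, x ≠ 0 → ∃ f : A →ₗ[ℝ] ℝ, Monotone f ∧ f x ≠ 0)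
    -- A is semiprime
    (hsemiA : ∀ x : A, x * x = 0 → x = 0)
    [Ring B] [Lattice B] [Algebra ℝ B] [CovariantClass B B (· + ·) (· ≤ ·)]
    -- B is a Riesz space (vector lattice) over ℝ
    (hsmulB : ∀ (r : ℝ) (x : B), 0 ≤ r → 0 ≤ x → 0 ≤ r • x)
    -- B is a lattice-ordered algebra
    (hmulB : ∀ x y : B, 0 ≤ x → 0 ≤ y → 0 ≤ x * y)
    -- the f-algebra condition
    (hfB : ∀ x y z : B, 0 ≤ z → x ⊓ y = 0 → (x * z) ⊓ y = 0 ∧ (z * x) ⊓ y = 0)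
    -- B is Archimedean
    (harchB : ∀ x y : B, (∀ n : ℕ, n • x ≤ y) → x ≤ 0)
    -- the order dual of B separates the points of B
    (hsepB : ∀ x : B, x ≠ 0 → ∃ f : B →ₗ[ℝ] ℝ, Monotone f ∧ f x ≠ 0)
    -- B is semiprime
    (hsemiB : ∀ x : B, x * x = 0 → x = 0)
    (T : A →ₗ[ℝ] B)
    -- T is order bounded
    (hTob : ∀ a : A, 0 ≤ a → ∃ b : B, ∀ x : A, |x| ≤ a → |T x| ≤ b)
    -- T vanishes on A ∩ Z(A)
    (hvan : ∀ a : A, (∃ l : ℝ, 0 ≤ l ∧ ∀ b : A, |a * b| ≤ l • |b|) → T a = 0) :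
    ∀ a : A, T a = 0 :=
  stmt_0_general hmulA hfA harchB T hTob hvan
end

section
/- Let A and B be Archimedean f-algebras with multiplicative unit elements e_A and e_B respectively (and point separating order duals), and let T : A → B be an order bounded linear operator satisfying T(e_A) = e_B. If |Ta| ≤ e_B whenever a ∈ A satisfies |a| ≤ e_A, then T is a positive operator (i.e. Ta ≥ 0 for every a ≥ 0). -/
/-!
In an `f`-algebra disjoint elements multiply to zero, so `x⁺ x⁻ = x⁻ x⁺ = 0`; hence squares are
positive, `0 ≤ 1`, and `d = (a - r)⁺` satisfies `r d ≤ a d ≤ a²` for `0 ≤ a` and `0 ≤ r`.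
If `0 ≤ c ≤ 1` then `|2c - 1| ≤ 1`, so `|2 T c - 1| ≤ 1` forces `T c ≥ 0`; by scaling, `T c ≥ 0`
whenever `0 ≤ c ≤ n`. For `a ≥ 0` and `d = (a - n)⁺` we have `0 ≤ a - d ≤ n`, so `T d ≤ T a`,
while `0 ≤ n d ≤ a²` and order boundedness bound `-n T d` by some `b` independent of `n`.
Thus `n (-T a) ≤ b` for all `n`, and `T a ≥ 0` because `B` is Archimedean.
-/

theorem posPart_sub_le_self {α : Type*} [Lattice α] [AddCommGroup α] [IsOrderedAddMonoid α]
    {a b : α} (ha : 0 ≤ a) (hb : 0 ≤ b) : (a - b)⁺ ≤ a :=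
  sup_le (sub_le_self a hb) ha

def IsFAlgebra (A : Type*) [Mul A] [Zero A] [Lattice A] : Prop :=
  ∀ x y z : A, 0 ≤ z → x ⊓ y = 0 → (x * z) ⊓ y = 0 ∧ (z * x) ⊓ y = 0

namespace IsFAlgebra

variable {A : Type*} [Ring A] [Lattice A]

theorem mul_eq_zero_of_inf_eq_zero (hf : IsFAlgebra A) {x y : A} (h : x ⊓ y = 0) :
    x * y = 0 := by
  have hy : 0 ≤ y := h ▸ inf_le_right
  have hxy : y ⊓ (x * y) = 0 := by rw [inf_comm]; exact (hf x y y hy h).1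
  rw [← inf_idem (x * y)]
  exact (hf y (x * y) x (h ▸ inf_le_left) hxy).2

variable [AddLeftMono A]

theorem negPart_mul_posPart (hf : IsFAlgebra A) (x : A) : x⁻ * x⁺ = 0 :=
  hf.mul_eq_zero_of_inf_eq_zero (by rw [inf_comm]; exact posPart_inf_negPart_eq_zero x)

theorem posPart_mul_negPart (hf : IsFAlgebra A) (x : A) : x⁺ * x⁻ = 0 :=
  hf.mul_eq_zero_of_inf_eq_zero (posPart_inf_negPart_eq_zero x)

theorem mul_self_nonneg (hf : IsFAlgebra A) (hmul : ∀ x y : A, 0 ≤ x → 0 ≤ y → 0 ≤ x * y)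
    (x : A) : 0 ≤ x * x := by
  have hsq : x * x = x⁺ * x⁺ + x⁻ * x⁻ := by
    conv_lhs => rw [← posPart_sub_negPart x]
    rw [sub_mul, mul_sub, mul_sub, hf.negPart_mul_posPart, hf.posPart_mul_negPart]
    abel
  rw [hsq]
  exact add_nonneg (hmul _ _ (posPart_nonneg x) (posPart_nonneg x))
    (hmul _ _ (negPart_nonneg x) (negPart_nonneg x))

theorem isOrderedRing [IsOrderedAddMonoid A] (hf : IsFAlgebra A)
    (hmul : ∀ x y : A, 0 ≤ x → 0 ≤ y → 0 ≤ x * y) : IsOrderedRing A :=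
  have : ZeroLEOneClass A := ⟨by simpa using hf.mul_self_nonneg hmul 1⟩
  .of_mul_nonneg hmul

theorem smul_posPart_sub_smul_one_le_mul_self [IsOrderedRing A] [Algebra ℝ A]
    [PosSMulMono ℝ A] (hf : IsFAlgebra A) {a : A} (ha : 0 ≤ a) {r : ℝ} (hr : 0 ≤ r) :
    r • (a - r • 1)⁺ ≤ a * a := by
  set d := (a - r • 1)⁺
  have hda : d ≤ a := posPart_sub_le_self ha (smul_nonneg hr zero_le_one)
  have had : a * d = d * d + r • d := by
    have hu : (a - r • 1) * d = d * d := by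
      conv_lhs => rw [← posPart_sub_negPart (a - r • 1)]
      rw [sub_mul, hf.negPart_mul_posPart, sub_zero]
    rw [← hu, ← sub_add_cancel a (r • 1), add_mul, sub_add_cancel, smul_mul_assoc, one_mul]
  calc r • d ≤ d * d + r • d :=
        le_add_of_nonneg_left (mul_nonneg (posPart_nonneg _) (posPart_nonneg _))
    _ = a * d := had.symm
    _ ≤ a * a := mul_le_mul_of_nonneg_left hda ha

end IsFAlgebra

namespace LinearMap

variable {A B : Type*} [AddCommGroup A] [Lattice A] [IsOrderedAddMonoid A] [Module ℝ A]
  [AddCommGroup B] [Lattice B] [IsOrderedAddMonoid B] [Module ℝ B] [PosSMulMono ℝ B]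

theorem map_nonneg_of_le (T : A →ₗ[ℝ] B) {u : A} (hT : ∀ a : A, |a| ≤ u → |T a| ≤ T u)
    {c : A} (hc : 0 ≤ c) (hcu : c ≤ u) : 0 ≤ T c := by
  have habs : |c + c - u| ≤ u := abs_le'.2
    ⟨by simpa using add_le_add hcu hcu, by simpa using add_nonneg hc hc⟩
  have h2 : 0 ≤ T c + T c := by
    have := (abs_le'.1 (hT _ habs)).2
    rwa [map_sub, map_add, neg_sub, sub_le_self_iff] at this
  have := smul_nonneg (by norm_num : (0 : ℝ) ≤ 2⁻¹) h2
  rwa [← two_smul ℝ, smul_smul, inv_mul_cancel₀ two_ne_zero, one_smul] at this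

theorem map_nonneg_of_le_smul [PosSMulMono ℝ A] (T : A →ₗ[ℝ] B) {u : A}
    (hT : ∀ a : A, |a| ≤ u → |T a| ≤ T u) {c : A} {r : ℝ} (hr : 0 ≤ r) (hc : 0 ≤ c)
    (hcu : c ≤ r • u) : 0 ≤ T c := by
  rcases hr.eq_or_lt with rfl | hr
  · rw [zero_smul] at hcu
    rw [le_antisymm hcu hc, map_zero]
  · have hcu' : r⁻¹ • c ≤ u := by
      simpa [smul_smul, inv_mul_cancel₀ hr.ne'] using
        smul_le_smul_of_nonneg_left hcu (inv_nonneg.2 hr.le)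
    have h := T.map_nonneg_of_le hT (smul_nonneg (inv_nonneg.2 hr.le) hc) hcu'
    simpa [smul_smul, mul_inv_cancel₀ hr.ne'] using smul_nonneg hr.le h

end LinearMap

theorem IsFAlgebra.map_nonneg_of_abs_le_one {A B : Type*} [Ring A] [Lattice A] [IsOrderedRing A]
    [Algebra ℝ A] [PosSMulMono ℝ A] [AddCommGroup B] [Lattice B] [IsOrderedAddMonoid B]
    [Module ℝ B] [PosSMulMono ℝ B] (hf : IsFAlgebra A)
    (harch : ∀ x y : B, (∀ n : ℕ, n • x ≤ y) → x ≤ 0) (T : A →ₗ[ℝ] B)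
    (hTob : ∀ a : A, 0 ≤ a → ∃ b : B, ∀ x : A, |x| ≤ a → |T x| ≤ b)
    (hT : ∀ a : A, |a| ≤ 1 → |T a| ≤ T 1) {a : A} (ha : 0 ≤ a) : 0 ≤ T a := by
  obtain ⟨b, hb⟩ := hTob (a * a) (mul_nonneg ha ha)
  refine neg_nonpos.1 (harch _ b fun n ↦ ?_)
  set d := (a - (n : ℝ) • 1)⁺
  have hd : 0 ≤ (n : ℝ) • d := smul_nonneg n.cast_nonneg (posPart_nonneg _)
  have hTd : T d ≤ T a := by
    have := T.map_nonneg_of_le_smul hT n.cast_nonneg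
      (sub_nonneg.2 (posPart_sub_le_self ha (smul_nonneg n.cast_nonneg zero_le_one)))
      (sub_le_comm.1 (le_posPart _))
    rwa [map_sub, sub_nonneg] at this
  calc n • -T a ≤ n • -T d := nsmul_le_nsmul_right (neg_le_neg hTd) n
    _ = -T ((n : ℝ) • d) := by rw [smul_neg, map_smul, Nat.cast_smul_eq_nsmul]
    _ ≤ |T ((n : ℝ) • d)| := neg_le_abs _
    _ ≤ b := hb _ (by
        rw [abs_of_nonneg hd]
        exact hf.smul_posPart_sub_smul_one_le_mul_self ha n.cast_nonneg)

theorem stmt_1_general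
    {A B : Type*}
    [Ring A] [Lattice A] [Algebra ℝ A] [CovariantClass A A (· + ·) (· ≤ ·)]
    -- A is a Riesz space (vector lattice) over ℝ
    (hsmulA : ∀ (r : ℝ) (x : A), 0 ≤ r → 0 ≤ x → 0 ≤ r • x)
    -- A is a lattice-ordered algebra
    (hmulA : ∀ x y : A, 0 ≤ x → 0 ≤ y → 0 ≤ x * y)
    -- the f-algebra condition
    (hfA : ∀ x y z : A, 0 ≤ z → x ⊓ y = 0 → (x * z) ⊓ y = 0 ∧ (z * x) ⊓ y = 0)
    [Ring B] [Lattice B] [Algebra ℝ B] [CovariantClass B B (· + ·) (· ≤ ·)]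
    -- B is a Riesz space (vector lattice) over ℝ
    (hsmulB : ∀ (r : ℝ) (x : B), 0 ≤ r → 0 ≤ x → 0 ≤ r • x)
    -- B is Archimedean
    (harchB : ∀ x y : B, (∀ n : ℕ, n • x ≤ y) → x ≤ 0)
    (T : A →ₗ[ℝ] B)
    -- T is order bounded
    (hTob : ∀ a : A, 0 ≤ a → ∃ b : B, ∀ x : A, |x| ≤ a → |T x| ≤ b)
    -- T maps the unit element of A to the unit element of B
    (hT1 : T 1 = 1)
    -- |T a| ≤ e_B whenever |a| ≤ e_A
    (hTcontr : ∀ a : A, |a| ≤ 1 → |T a| ≤ 1) :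
    ∀ a : A, 0 ≤ a → 0 ≤ T a := by
  have : IsOrderedAddMonoid A := { add_le_add_left := fun _ _ h c ↦ add_le_add_left h c }
  have : IsOrderedAddMonoid B := { add_le_add_left := fun _ _ h c ↦ add_le_add_left h c }
  have : IsOrderedRing A := IsFAlgebra.isOrderedRing hfA hmulA
  have : PosSMulMono ℝ A := .of_smul_nonneg fun r hr x hx ↦ hsmulA r x hr hx
  have : PosSMulMono ℝ B := .of_smul_nonneg fun r hr x hx ↦ hsmulB r x hr hx
  exact fun a ha ↦ IsFAlgebra.map_nonneg_of_abs_le_one hfA harchB T hTob (hT1 ▸ hTcontr) ha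

/-- An order bounded linear operator `T` between unital Archimedean `f`-algebras
with point separating order duals such that `T 1 = 1` and `|T a| ≤ 1` whenever
`|a| ≤ 1` is positive. -/
theorem stmt_1
    {A B : Type*}
    [Ring A] [Lattice A] [Algebra ℝ A] [CovariantClass A A (· + ·) (· ≤ ·)]
    -- A is a Riesz space (vector lattice) over ℝ
    (hsmulA : ∀ (r : ℝ) (x : A), 0 ≤ r → 0 ≤ x → 0 ≤ r • x)
    -- A is a lattice-ordered algebra
    (hmulA : ∀ x y : A, 0 ≤ x → 0 ≤ y → 0 ≤ x * y)
    -- the f-algebra condition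
    (hfA : ∀ x y z : A, 0 ≤ z → x ⊓ y = 0 → (x * z) ⊓ y = 0 ∧ (z * x) ⊓ y = 0)
    -- A is Archimedean
    (harchA : ∀ x y : A, (∀ n : ℕ, n • x ≤ y) → x ≤ 0)
    -- the order dual of A separates the points of A
    (hsepA : ∀ x : A, x ≠ 0 → ∃ f : A →ₗ[ℝ] ℝ, Monotone f ∧ f x ≠ 0)
    [Ring B] [Lattice B] [Algebra ℝ B] [CovariantClass B B (· + ·) (· ≤ ·)]
    -- B is a Riesz space (vector lattice) over ℝ
    (hsmulB : ∀ (r : ℝ) (x : B), 0 ≤ r → 0 ≤ x → 0 ≤ r • x)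
    -- B is a lattice-ordered algebra
    (hmulB : ∀ x y : B, 0 ≤ x → 0 ≤ y → 0 ≤ x * y)
    -- the f-algebra condition
    (hfB : ∀ x y z : B, 0 ≤ z → x ⊓ y = 0 → (x * z) ⊓ y = 0 ∧ (z * x) ⊓ y = 0)
    -- B is Archimedean
    (harchB : ∀ x y : B, (∀ n : ℕ, n • x ≤ y) → x ≤ 0)
    -- the order dual of B separates the points of B
    (hsepB : ∀ x : B, x ≠ 0 → ∃ f : B →ₗ[ℝ] ℝ, Monotone f ∧ f x ≠ 0)
    (T : A →ₗ[ℝ] B)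
    -- T is order bounded
    (hTob : ∀ a : A, 0 ≤ a → ∃ b : B, ∀ x : A, |x| ≤ a → |T x| ≤ b)
    -- T maps the unit element of A to the unit element of B
    (hT1 : T 1 = 1)
    -- |T a| ≤ e_B whenever |a| ≤ e_A
    (hTcontr : ∀ a : A, |a| ≤ 1 → |T a| ≤ 1) :
    ∀ a : A, 0 ≤ a → 0 ≤ T a :=
  stmt_1_general hsmulA hmulA hfA hsmulB harchB T hTob hT1 hTcontr
end

section
/- Let A be an Archimedean semiprime f-algebra with point separating order dual. A positive element a₀ ∈ A is a weak order unit if and only if inf{ |a − λa₀| : λ ∈ ℝ } = 0 holds in A for every a ∈ A. -/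
/-!
If `|a| ⊓ a₀ = 0`, then `|a|` is also disjoint from every `|λ| • a₀`, so `|a| ≤ |a - λ • a₀|` for
all `λ` and the infimum being `0` forces `a = 0`. Conversely, let `b ≤ |a - λ • a₀|` for all `λ`.
Comparing `b` with `|a - λ • a₀|` along the grid `λ ∈ [-n, n] ∩ n⁻¹ℤ` gives
`b ≤ n⁻¹ • a₀ + (|a| - n • a₀)⁺`, and hence `n • (b⁺ ⊓ a₀) ≤ a₀ + |a|` for every `n`.
By the Archimedean property `b⁺ ⊓ a₀ = 0`, so `b⁺ = 0` because `a₀` is a weak order unit.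
-/

section LatticeOrderedGroup

variable {α : Type*} [AddCommGroup α] [Lattice α] [IsOrderedAddMonoid α] {b p q u x y : α}

lemma inf_add_le_of_inf_eq_zero (hp : 0 ≤ p) (h : x ⊓ q = 0) : x ⊓ (p + q) ≤ p :=
  calc x ⊓ (p + q) ≤ (p + x) ⊓ (p + q) := inf_le_inf_right _ (le_add_of_nonneg_left hp)
    _ = p := by rw [← add_inf, h, add_zero]

lemma add_inf_le_add_inf (hp : 0 ≤ p) : (p + x) ⊓ y ≤ p + x ⊓ y :=
  calc (p + x) ⊓ y ≤ (p + x) ⊓ (p + y) := inf_le_inf_left _ (le_add_of_nonneg_left hp)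
    _ = p + x ⊓ y := (add_inf x y p).symm

lemma posPart_sub_sup_negPart_add (a c : α) : (a - c)⁺ ⊔ (a + c)⁻ = (|a| - c)⁺ := by
  rw [negPart_def, posPart_def, posPart_def, neg_add', sup_sup_sup_comm, sup_idem, ← sup_sub,
    abs]

lemma le_add_sup_negPart_add_of_le (hu : 0 ≤ u) (hb : b ≤ u + (x ⊔ y⁻))
    (hy : b ≤ |y| ⊓ |y + u|) : b ≤ u + (x ⊔ (y + u)⁻) := by
  let := AddCommGroup.toDistribLattice α
  have hu_le : u ≤ u + (x ⊔ (y + u)⁻) :=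
    le_add_of_nonneg_right (le_sup_of_le_right (negPart_nonneg _))
  have hpos : (u + (x ⊔ y⁻)) ⊓ y⁺ ≤ u + (x ⊔ (y + u)⁻) := by
    rw [add_sup, inf_sup_right]
    refine sup_le (inf_le_left.trans (add_le_add_right le_sup_left u)) ?_
    rw [inf_comm]
    exact (inf_add_le_of_inf_eq_zero hu (posPart_inf_negPart_eq_zero y)).trans hu_le
  have hneg : |y + u| ⊓ y⁻ ≤ u + (x ⊔ (y + u)⁻) := by
    have hpos_add : (y + u)⁺ ≤ u + y⁺ :=
      sup_le (by rw [add_comm]; exact add_le_add_right (le_posPart y) u)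
        (add_nonneg hu (posPart_nonneg y))
    calc |y + u| ⊓ y⁻ ≤ ((u + y⁺) ⊔ (y + u)⁻) ⊓ y⁻ :=
          inf_le_inf_right _ (sup_le_sup (le_posPart _ |>.trans hpos_add) (neg_le_negPart _))
      _ ≤ u ⊔ (y + u)⁻ := by
          rw [inf_sup_right, inf_comm]
          refine sup_le_sup (inf_add_le_of_inf_eq_zero hu ?_) inf_le_left
          rw [inf_comm, posPart_inf_negPart_eq_zero]
      _ ≤ u + (x ⊔ (y + u)⁻) := sup_le hu_le
          (le_add_of_nonneg_left hu |>.trans (add_le_add_right le_sup_right u))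
  have habs : |y| ⊓ |y + u| ≤ y⁺ ⊔ (|y + u| ⊓ y⁻) :=
    calc |y| ⊓ |y + u| ≤ (y⁺ ⊔ y⁻) ⊓ |y + u| :=
          inf_le_inf_right _ (sup_le_sup (le_posPart y) (neg_le_negPart y))
      _ ≤ y⁺ ⊔ (|y + u| ⊓ y⁻) := by
          rw [inf_sup_right, inf_comm _ y⁻]
          exact sup_le_sup_right inf_le_left _
  calc b ≤ (u + (x ⊔ y⁻)) ⊓ (y⁺ ⊔ (|y + u| ⊓ y⁻)) := le_inf hb (hy.trans habs)
    _ ≤ u + (x ⊔ (y + u)⁻) := by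
        rw [inf_sup_left]
        exact sup_le hpos (inf_le_right.trans hneg)

/- Pointwise: either `x ≥ 0`, or `x + N • u ≤ 0`, or some consecutive grid points satisfy
`x + k • u ≤ 0 ≤ x + (k + 1) • u`, and one of them lies within `u` of `0`. -/
lemma le_add_posPart_sup_negPart_of_forall_le_abs (hu : 0 ≤ u) :
    ∀ N : ℕ, (∀ k ≤ N, b ≤ |x + k • u|) → b ≤ u + (x⁺ ⊔ (x + N • u)⁻)
  | 0, h => by
    have hx : b ≤ |x| := by simpa using h 0 le_rfl
    rw [zero_smul, add_zero]
    exact hx.trans (le_add_of_nonneg_left hu |>.trans (add_le_add_right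
      (sup_le_sup (le_posPart x) (neg_le_negPart x)) u))
  | N + 1, h => by
    rw [succ_nsmul, ← add_assoc]
    refine le_add_sup_negPart_add_of_le hu
      (le_add_posPart_sup_negPart_of_forall_le_abs hu N fun k hk => h k (by omega)) (le_inf ?_ ?_)
    · exact h N (by omega)
    · simpa [succ_nsmul, add_assoc] using h (N + 1) le_rfl

end LatticeOrderedGroup

section RieszSpace

variable {𝕜 E : Type*} [Field 𝕜] [LinearOrder 𝕜] [IsStrictOrderedRing 𝕜]
  [AddCommGroup E] [Lattice E] [Module 𝕜 E] [PosSMulMono 𝕜 E] {a a₀ b e x y : E}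

lemma smul_posPart_of_pos {r : 𝕜} (hr : 0 < r) (x : E) : r • x⁺ = (r • x)⁺ := by
  simpa only [OrderIso.smulRight_apply, smul_zero, posPart_def] using
    (OrderIso.smulRight hr).map_sup x 0

variable [IsOrderedAddMonoid E]

lemma abs_smul_of_nonneg (r : 𝕜) (hx : 0 ≤ x) : |r • x| = |r| • x := by
  rcases le_total 0 r with hr | hr
  · rw [abs_of_nonneg hr, abs_of_nonneg (smul_nonneg hr hx)]
  · rw [abs_of_nonpos hr, abs_of_nonpos (smul_nonpos_of_nonpos_of_nonneg hr hx), neg_smul]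

lemma inf_smul_eq_zero_of_inf_eq_zero (hx : 0 ≤ x) (hy : 0 ≤ y) {r : 𝕜} (hr : 0 ≤ r)
    (h : x ⊓ y = 0) : x ⊓ r • y = 0 := by
  have hr₁ : (0 : 𝕜) < 1 + r := by linarith
  refine le_antisymm ?_ (le_inf hx (smul_nonneg hr hy))
  calc x ⊓ r • y ≤ (1 + r) • x ⊓ (1 + r) • y := by
        refine inf_le_inf ?_ ?_
        · rw [add_smul, one_smul]; exact le_add_of_nonneg_right (smul_nonneg hr hx)
        · rw [add_smul, one_smul]; exact le_add_of_nonneg_left hy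
    _ = 0 := by
        have := (OrderIso.smulRight hr₁).map_inf x y
        simp only [OrderIso.smulRight_apply] at this
        rw [← this, h, smul_zero]

lemma smul_posPart_sub_smul_inf_le {r : 𝕜} (hr : 0 ≤ r) (he : 0 ≤ e) (hy : 0 ≤ y) :
    r • ((y - r • e)⁺ ⊓ e) ≤ y := by
  let := AddCommGroup.toDistribLattice E
  set v := (y - r • e) ⊓ e
  have hv : (y - r • e)⁺ ⊓ e = v⁺ := by
    rw [posPart_def, posPart_def, inf_sup_right, inf_eq_left.2 he]
  have hv_le : (r + 1) • v ≤ y :=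
    calc (r + 1) • v = r • v + v := by rw [add_smul, one_smul]
      _ ≤ r • e + (y - r • e) :=
          add_le_add (smul_le_smul_of_nonneg_left inf_le_right hr) inf_le_left
      _ = y := add_sub_cancel _ _
  calc r • ((y - r • e)⁺ ⊓ e) = r • v⁺ := by rw [hv]
    _ ≤ (r + 1) • v⁺ := by
        rw [add_smul, one_smul]
        exact le_add_of_nonneg_right (posPart_nonneg v)
    _ = ((r + 1) • v)⁺ := smul_posPart_of_pos (by linarith) v
    _ ≤ y := sup_le hv_le hy

lemma le_inv_smul_add_posPart_abs_sub (ha₀ : 0 ≤ a₀) (hb : ∀ l : 𝕜, b ≤ |a - l • a₀|) {n : ℕ}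
    (hn : n ≠ 0) : b ≤ (n : 𝕜)⁻¹ • a₀ + (|a| - (n : 𝕜) • a₀)⁺ := by
  have hgrid := le_add_posPart_sup_negPart_of_forall_le_abs (b := b) (x := a - (n : 𝕜) • a₀)
    (smul_nonneg (inv_nonneg.2 n.cast_nonneg) ha₀) (2 * n * n) fun k _ => by
      convert hb ((n : 𝕜) - k * (n : 𝕜)⁻¹) using 2
      rw [← Nat.cast_smul_eq_nsmul 𝕜, smul_smul, sub_smul]
      abel
  have hscale : ((2 * n * n : ℕ) : 𝕜) * (n : 𝕜)⁻¹ = 2 * n := by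
    push_cast
    field_simp [Nat.cast_ne_zero.2 hn]
  have hend : a - (n : 𝕜) • a₀ + (2 * n * n) • ((n : 𝕜)⁻¹ • a₀) = a + (n : 𝕜) • a₀ := by
    rw [← Nat.cast_smul_eq_nsmul 𝕜, smul_smul, hscale, two_mul, add_smul]
    abel
  rwa [hend, posPart_sub_sup_negPart_add] at hgrid

lemma nsmul_inf_le_add_abs (ha₀ : 0 ≤ a₀) (hb : ∀ l : 𝕜, b ≤ |a - l • a₀|)
    (n : ℕ) : n • (b ⊓ a₀) ≤ a₀ + |a| := by
  rcases eq_or_ne n 0 with rfl | hn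
  · rw [zero_nsmul]; exact add_nonneg ha₀ (abs_nonneg a)
  set z := (|a| - (n : 𝕜) • a₀)⁺
  have hinf : b ⊓ a₀ ≤ (n : 𝕜)⁻¹ • a₀ + z ⊓ a₀ :=
    (inf_le_inf_right a₀ (le_inv_smul_add_posPart_abs_sub ha₀ hb hn)).trans
      (add_inf_le_add_inf (smul_nonneg (inv_nonneg.2 n.cast_nonneg) ha₀))
  calc n • (b ⊓ a₀) = (n : 𝕜) • (b ⊓ a₀) := (Nat.cast_smul_eq_nsmul 𝕜 n _).symm
    _ ≤ (n : 𝕜) • ((n : 𝕜)⁻¹ • a₀ + z ⊓ a₀) := smul_le_smul_of_nonneg_left hinf n.cast_nonneg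
    _ = a₀ + (n : 𝕜) • (z ⊓ a₀) := by rw [smul_add, smul_inv_smul₀ (Nat.cast_ne_zero.2 hn)]
    _ ≤ a₀ + |a| := add_le_add_right
        (smul_posPart_sub_smul_inf_le n.cast_nonneg ha₀ (abs_nonneg a)) a₀

lemma abs_le_abs_sub_smul_of_abs_inf_eq_zero (ha₀ : 0 ≤ a₀) (h : |a| ⊓ a₀ = 0) (l : 𝕜) :
    |a| ≤ |a - l • a₀| :=
  calc |a| = |a| ⊓ (|a - l • a₀| + |l • a₀|) := by
        refine (inf_eq_left.2 ?_).symm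
        simpa using abs_add_le (a - l • a₀) (l • a₀)
    _ ≤ |a - l • a₀| := by
        refine inf_add_le_of_inf_eq_zero (abs_nonneg _) ?_
        rw [abs_smul_of_nonneg l ha₀]
        exact inf_smul_eq_zero_of_inf_eq_zero (abs_nonneg a) ha₀ (abs_nonneg l) h

end RieszSpace

theorem stmt_2_general
    {A : Type*}
    [Ring A] [Lattice A] [Algebra ℝ A] [CovariantClass A A (· + ·) (· ≤ ·)]
    -- A is a Riesz space (vector lattice) over ℝ
    (hsmulA : ∀ (r : ℝ) (x : A), 0 ≤ r → 0 ≤ x → 0 ≤ r • x)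
    -- A is Archimedean
    (harchA : ∀ x y : A, (∀ n : ℕ, n • x ≤ y) → x ≤ 0)
    (a₀ : A) (ha₀ : 0 < a₀) :
    (∀ a : A, |a| ⊓ a₀ = 0 → a = 0) ↔
      (∀ a : A, IsGLB {x : A | ∃ l : ℝ, x = |a - l • a₀|} 0) := by
  have : IsOrderedAddMonoid A :=
    ⟨fun _ _ h c => add_le_add_left h c, fun _ _ h c => add_le_add_right h c⟩
  have : PosSMulMono ℝ A := .of_smul_nonneg fun r hr x hx => hsmulA r x hr hx
  constructor
  · refine fun hwou a => ⟨fun _ ⟨l, hl⟩ => hl ▸ abs_nonneg _, fun b hb => ?_⟩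
    have hb' (l : ℝ) : b⁺ ≤ |a - l • a₀| := sup_le (hb ⟨l, rfl⟩) (abs_nonneg _)
    have hdisj : b⁺ ⊓ a₀ = 0 := le_antisymm (harchA _ _ (nsmul_inf_le_add_abs ha₀.le hb'))
      (le_inf (posPart_nonneg b) ha₀.le)
    exact posPart_eq_zero.1 (hwou _ (by rwa [abs_of_nonneg (posPart_nonneg b)]))
  · intro hglb a ha
    have habs : |a| ≤ 0 := (hglb a).2 fun _ ⟨l, hl⟩ =>
      hl ▸ abs_le_abs_sub_smul_of_abs_inf_eq_zero ha₀.le ha l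
    exact le_antisymm ((le_abs_self a).trans habs) (neg_nonpos.1 ((neg_le_abs a).trans habs))

/-- In an Archimedean semiprime `f`-algebra with point separating order dual,
a positive element `a₀` is a weak order unit if and only if
`inf {|a - λ • a₀| : λ ∈ ℝ} = 0` for every `a`. -/
theorem stmt_2
    {A : Type*}
    [Ring A] [Lattice A] [Algebra ℝ A] [CovariantClass A A (· + ·) (· ≤ ·)]
    -- A is a Riesz space (vector lattice) over ℝ
    (hsmulA : ∀ (r : ℝ) (x : A), 0 ≤ r → 0 ≤ x → 0 ≤ r • x)
    -- A is a lattice-ordered algebra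
    (hmulA : ∀ x y : A, 0 ≤ x → 0 ≤ y → 0 ≤ x * y)
    -- the f-algebra condition
    (hfA : ∀ x y z : A, 0 ≤ z → x ⊓ y = 0 → (x * z) ⊓ y = 0 ∧ (z * x) ⊓ y = 0)
    -- A is Archimedean
    (harchA : ∀ x y : A, (∀ n : ℕ, n • x ≤ y) → x ≤ 0)
    -- the order dual of A separates the points of A
    (hsepA : ∀ x : A, x ≠ 0 → ∃ f : A →ₗ[ℝ] ℝ, Monotone f ∧ f x ≠ 0)
    -- A is semiprime
    (hsemiA : ∀ x : A, x * x = 0 → x = 0)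
    (a₀ : A) (ha₀ : 0 < a₀) :
    (∀ a : A, |a| ⊓ a₀ = 0 → a = 0) ↔
      (∀ a : A, IsGLB {x : A | ∃ l : ℝ, x = |a - l • a₀|} 0) :=
  stmt_2_general hsmulA harchA a₀ ha₀
end

section
/- Let A and B be Archimedean f-algebras with unit elements e_A and e_B respectively (and point separating order duals). If a Markov operator T : A → B is an extreme point of the convex set of Markov operators from A to B, then inf{ T|a − λe_A| : λ ∈ ℝ } = 0 in B for every a ∈ A. -/
/-!
If `|h| ≤ c 1`, both perturbations `T ± (2c)⁻¹ (x ↦ T (x h) - T x * T h)` of an extreme Markov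
operator `T` are Markov, so `T (x h) = T x * T h`. In an Archimedean f-algebra disjointness is the
same as vanishing product, hence `T` is a lattice homomorphism on the order ideal of the unit.
If `w ≤ T |a - λ 1|` for all `λ`, truncating `a` at level `N` and using that in an Archimedean Riesz
space with weak unit `e` nothing positive lies below every `|b - λ e|` gives `w ≤ T (|a| - N)⁺`.
This is disjoint from `T (|a| - N)⁻`, which forces `N (w⁺ ⊓ 1) ≤ T |a|` for every `N`, so `w ≤ 0`.
-/

section LatticeOrderedAddCommGroup

variable {α : Type*} [AddCommGroup α] [Lattice α] [IsOrderedAddMonoid α]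

lemma add_inf_le_inf_add_inf {a b c : α} (ha : 0 ≤ a) (hb : 0 ≤ b) (hc : 0 ≤ c) :
    (a + b) ⊓ c ≤ a ⊓ c + b ⊓ c := by
  rw [inf_add, add_inf, add_inf]
  exact le_inf (le_inf inf_le_left (inf_le_right.trans (le_add_of_nonneg_left ha)))
    (le_inf (inf_le_right.trans (le_add_of_nonneg_right hb))
      (inf_le_right.trans (le_add_of_nonneg_right hc)))

lemma le_of_le_add_of_inf_nonpos {s p q : α} (hp : 0 ≤ p) (h : s ≤ p + q) (hsq : s ⊓ q ≤ 0) :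
    s ≤ p :=
  sub_nonpos.1 <| (le_inf (sub_le_self s hp) (sub_le_iff_le_add'.2 h)).trans hsq

lemma abs_sub_eq_add_of_inf_eq_zero {a b : α} (h : a ⊓ b = 0) : |a - b| = a + b := by
  rw [← sup_sub_inf_eq_abs_sub b a, inf_comm, h, sub_zero, ← inf_add_sup, h, zero_add, sup_comm]

lemma inf_abs_le_add_negPart (x y : α) : (y + (y - x)⁺) ⊓ |x| ≤ y + x⁻ := by
  have h₁ : y + (y - x)⁺ ≤ y + x⁻ + (y - x⁺)⁺ := by
    have hx : y - x = (y - x⁺) + x⁻ := by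
      conv_lhs => rw [← posPart_sub_negPart x]
      abel
    rw [hx, add_assoc]
    gcongr
    exact sup_le (by rw [add_comm (y - x⁺)]; gcongr; exact le_posPart _)
      (add_nonneg (negPart_nonneg x) (posPart_nonneg _))
  have h₂ : |x| ≤ y + x⁻ + (y - x⁺)⁻ := by
    calc |x| = y + x⁻ + -(y - x⁺) := by rw [← posPart_add_negPart x]; abel
      _ ≤ y + x⁻ + (y - x⁺)⁻ := by gcongr; exact neg_le_negPart _
  calc (y + (y - x)⁺) ⊓ |x| ≤ (y + x⁻ + (y - x⁺)⁺) ⊓ (y + x⁻ + (y - x⁺)⁻) := inf_le_inf h₁ h₂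
    _ = y + x⁻ := by rw [← add_inf, posPart_inf_negPart_eq_zero, add_zero]

lemma abs_inf_sup_neg_le {c : α} (hc : 0 ≤ c) (a : α) : |a ⊓ c ⊔ -c| ≤ c :=
  abs_le'.2 ⟨sup_le inf_le_right (neg_le_self hc), neg_le.1 le_sup_right⟩

lemma abs_sub_inf_sup_neg_le (a c : α) : |a - (a ⊓ c ⊔ -c)| ≤ (|a| - c)⁺ := by
  refine abs_le'.2 ⟨?_, ?_⟩
  · calc a - (a ⊓ c ⊔ -c) ≤ a - a ⊓ c := sub_le_sub_left le_sup_left a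
      _ = (a - c)⁺ := by rw [sub_inf, sub_self, posPart_def, sup_comm]
      _ ≤ (|a| - c)⁺ := posPart_mono (sub_le_sub_right (le_abs_self a) c)
  · calc -(a - (a ⊓ c ⊔ -c)) ≤ a ⊔ -c - a := by
          rw [neg_sub]; exact sub_le_sub_right (sup_le_sup_right inf_le_left _) a
      _ = (-a - c)⁺ := by rw [sup_sub, sub_self, posPart_def, sup_comm, neg_sub_comm]
      _ ≤ (|a| - c)⁺ := posPart_mono (sub_le_sub_right (neg_le_abs a) c)

end LatticeOrderedAddCommGroup

/-- Not Mathlib's `Archimedean`, which makes every positive element a strong unit and so fails in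
most Riesz spaces. -/
def IsArchimedeanLattice (α : Type*) [AddMonoid α] [LE α] : Prop :=
  ∀ x y : α, (∀ n : ℕ, n • x ≤ y) → x ≤ 0

section RieszSpace

variable {α : Type*} [AddCommGroup α] [Lattice α] [Module ℝ α]

lemma abs_smul_le_smul_abs [PosSMulMono ℝ α] {r : ℝ} (hr : 0 ≤ r) (x : α) : |r • x| ≤ r • |x| :=
  abs_le'.2 ⟨smul_le_smul_of_nonneg_left (le_abs_self x) hr,
    by rw [← smul_neg]; exact smul_le_smul_of_nonneg_left (neg_le_abs x) hr⟩

lemma IsArchimedeanLattice.nonpos_of_forall_smul_le (harch : IsArchimedeanLattice α) {s x : α}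
    (hx : 0 ≤ x) (h : ∀ n : ℕ, 1 ≤ n → (n : ℝ) • s ≤ x) : s ≤ 0 := by
  refine harch s x fun n => ?_
  rcases Nat.eq_zero_or_pos n with rfl | hn
  · simpa using hx
  · simpa [Nat.cast_smul_eq_nsmul] using h n hn

variable [IsOrderedAddMonoid α] [IsOrderedModule ℝ α]

lemma smul_le_of_inf_posPart_nonpos {e s x : α} {N : ℝ} (hN : 1 ≤ N) (hx : 0 ≤ x) (hse : s ≤ e)
    (h : s ⊓ (N • e - x)⁺ ≤ 0) : N • s ≤ x := by
  have hN₀ : 0 < N := zero_lt_one.trans_le hN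
  refine le_of_le_add_of_inf_nonpos (q := (N • e - x)⁺) hx ?_ ?_
  · calc N • s ≤ N • e := smul_le_smul_of_nonneg_left hse hN₀.le
      _ = x + (N • e - x) := (add_sub_cancel x _).symm
      _ ≤ x + (N • e - x)⁺ := by gcongr; exact le_posPart _
  · calc N • s ⊓ (N • e - x)⁺ ≤ N • s ⊓ N • (N • e - x)⁺ :=
          inf_le_inf_left _ (le_smul_of_one_le_left (posPart_nonneg _) hN)
      _ = N • (s ⊓ (N • e - x)⁺) := ((OrderIso.smulRight hN₀).map_inf _ _).symm
      _ ≤ 0 := smul_nonpos_of_nonneg_of_nonpos hN₀.le h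

/-- Where `b` lies in `[R - k ε, R]`, the bounds `u ≤ |b - l e|` at the grid points `l = R - i ε`
leave at most `ε e` of `u`. -/
lemma le_add_posPart_sub_of_forall_le_abs_sub {e b u : α} (he : 0 ≤ e)
    (hu : ∀ l : ℝ, u ≤ |b - l • e|) {ε : ℝ} (hε : 0 ≤ ε) (R : ℝ) (k : ℕ) :
    u ≤ ε • e + ((R - k * ε) • e - b)⁺ + (b - R • e)⁺ := by
  induction k with
  | zero =>
    calc u ≤ |b - R • e| := hu R
      _ = (R • e - b)⁺ + (b - R • e)⁺ := by
          rw [← posPart_add_negPart, ← posPart_neg, neg_sub, add_comm]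
      _ ≤ ε • e + ((R - (0 : ℕ) * ε) • e - b)⁺ + (b - R • e)⁺ := by
          rw [Nat.cast_zero, zero_mul, sub_zero, add_assoc]
          exact le_add_of_nonneg_left (smul_nonneg hε he)
  | succ k ih =>
    set x := b - (R - (k + 1) * ε) • e
    have hx : ε • e - x = (R - k * ε) • e - b := by simp only [x]; module
    calc u ≤ (ε • e + (ε • e - x)⁺ + (b - R • e)⁺) ⊓ (|x| + (b - R • e)⁺) := by
          rw [hx]
          exact le_inf ih ((hu _).trans (le_add_of_nonneg_right (posPart_nonneg _)))
      _ = (ε • e + (ε • e - x)⁺) ⊓ |x| + (b - R • e)⁺ := (inf_add _ _ _).symm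
      _ ≤ ε • e + x⁻ + (b - R • e)⁺ := by gcongr; exact inf_abs_le_add_negPart x _
      _ = ε • e + ((R - (k + 1 : ℕ) * ε) • e - b)⁺ + (b - R • e)⁺ := by
          rw [← posPart_neg, neg_sub, Nat.cast_succ]

lemma eq_zero_of_forall_le_posPart_abs_sub (harch : IsArchimedeanLattice α) {e : α} (he : 0 ≤ e)
    (hweak : ∀ c : α, 0 ≤ c → c ⊓ e = 0 → c = 0) {b c : α} (hc : 0 ≤ c)
    (h : ∀ n : ℕ, c ≤ (|b| - (n : ℝ) • e)⁺ + (|b| - (n : ℝ) • e)⁺) : c = 0 := by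
  refine hweak c hc (le_antisymm ?_ (le_inf hc he))
  refine harch.nonpos_of_forall_smul_le (abs_nonneg b) fun n hn =>
    smul_le_of_inf_posPart_nonpos (Nat.one_le_cast.2 hn) (abs_nonneg b) inf_le_right ?_
  set y := |b| - (n : ℝ) • e
  calc c ⊓ e ⊓ ((n : ℝ) • e - |b|)⁺ ≤ (y⁺ + y⁺) ⊓ y⁻ := by
        rw [← posPart_neg, neg_sub]; exact inf_le_inf_right _ (inf_le_left.trans (h n))
    _ ≤ y⁺ ⊓ y⁻ + y⁺ ⊓ y⁻ :=
        add_inf_le_inf_add_inf (posPart_nonneg y) (posPart_nonneg y) (negPart_nonneg y)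
    _ = 0 := by rw [posPart_inf_negPart_eq_zero, add_zero]

theorem nonpos_of_forall_le_abs_sub_smul (harch : IsArchimedeanLattice α) {e : α} (he : 0 ≤ e)
    (hweak : ∀ c : α, 0 ≤ c → c ⊓ e = 0 → c = 0) {b v : α} (hv : ∀ l : ℝ, v ≤ |b - l • e|) :
    v ≤ 0 := by
  have tail (m n : ℕ) (hm : 1 ≤ m) :
      v ≤ (m : ℝ)⁻¹ • e + ((|b| - (n : ℝ) • e)⁺ + (|b| - (n : ℝ) • e)⁺) := by
    -- `2 n m` steps of mesh `1 / m` sweep the grid from `n` down to `-n`.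
    have h := le_add_posPart_sub_of_forall_le_abs_sub he hv (ε := (m : ℝ)⁻¹) (by positivity) n
      (2 * n * m)
    have hR : (n : ℝ) - ((2 * n * m : ℕ) : ℝ) * (m : ℝ)⁻¹ = -n := by
      have : (m : ℝ) ≠ 0 := by positivity
      push_cast; field_simp; ring
    rw [hR, add_assoc] at h
    refine h.trans (add_le_add le_rfl (add_le_add (posPart_mono ?_) (posPart_mono ?_)))
    · rw [neg_smul, neg_sub_comm]
      exact sub_le_sub_right (neg_le_abs b) _
    · exact sub_le_sub_right (le_abs_self b) _
  refine harch.nonpos_of_forall_smul_le he fun m hm => ?_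
  have hc := eq_zero_of_forall_le_posPart_abs_sub harch he hweak (posPart_nonneg _) fun n =>
    sup_le (sub_le_iff_le_add'.2 (tail m n hm)) (add_nonneg (posPart_nonneg _) (posPart_nonneg _))
  calc (m : ℝ) • v ≤ (m : ℝ) • ((m : ℝ)⁻¹ • e) :=
        smul_le_smul_of_nonneg_left (sub_nonpos.1 (posPart_eq_zero.1 hc)) (by positivity)
    _ = e := smul_inv_smul₀ (by positivity) e

end RieszSpace

def FAlgebraAxiom (R : Type*) [Mul R] [Zero R] [Lattice R] : Prop :=
  ∀ x y z : R, 0 ≤ z → x ⊓ y = 0 → (x * z) ⊓ y = 0 ∧ (z * x) ⊓ y = 0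

namespace FAlgebraAxiom

variable {R : Type*} [Ring R] [Lattice R]

lemma mul_eq_zero_of_inf_eq_zero (hf : FAlgebraAxiom R) {x y : R} (h : x ⊓ y = 0) :
    x * y = 0 := by
  have hx : 0 ≤ x := h ▸ inf_le_left
  have hy : 0 ≤ y := h ▸ inf_le_right
  have hxy : y ⊓ (x * y) = 0 := by rw [inf_comm]; exact (hf x y y hy h).1
  simpa using (hf y (x * y) x hx hxy).2

lemma eq_zero_of_inf_one_eq_zero (hf : FAlgebraAxiom R) {c : R} (hc : 0 ≤ c) (h : c ⊓ 1 = 0) :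
    c = 0 := by
  simpa using (hf 1 c c hc (by rwa [inf_comm])).1

lemma mul_self_nonneg [IsOrderedAddMonoid R] (hmul : ∀ x y : R, 0 ≤ x → 0 ≤ y → 0 ≤ x * y)
    (hf : FAlgebraAxiom R) (x : R) : 0 ≤ x * x := by
  have h₁ : x⁺ * x⁻ = 0 := hf.mul_eq_zero_of_inf_eq_zero (posPart_inf_negPart_eq_zero x)
  have h₂ : x⁻ * x⁺ = 0 :=
    hf.mul_eq_zero_of_inf_eq_zero (by rw [inf_comm, posPart_inf_negPart_eq_zero])
  have hsq : x * x = x⁺ * x⁺ + x⁻ * x⁻ := by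
    conv_lhs => rw [← posPart_sub_negPart x]
    rw [sub_mul, mul_sub, mul_sub, h₁, h₂]
    abel
  rw [hsq]
  exact add_nonneg (hmul _ _ (posPart_nonneg x) (posPart_nonneg x))
    (hmul _ _ (negPart_nonneg x) (negPart_nonneg x))

lemma isOrderedRing [AddLeftMono R] (hmul : ∀ x y : R, 0 ≤ x → 0 ≤ y → 0 ≤ x * y)
    (hf : FAlgebraAxiom R) : IsOrderedRing R :=
  have : IsOrderedAddMonoid R := { add_le_add_left := fun _ _ h c => add_le_add_left h c }
  have : ZeroLEOneClass R := ⟨by simpa using hf.mul_self_nonneg hmul 1⟩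
  .of_mul_nonneg hmul

variable [IsOrderedRing R]

lemma eq_zero_of_mul_self_eq_zero (hf : FAlgebraAxiom R) (harch : IsArchimedeanLattice R)
    {c : R} (hc : 0 ≤ c) (h : c * c = 0) : c = 0 := by
  refine le_antisymm (harch c 1 fun n => ?_) hc
  have hsq := hf.mul_self_nonneg (fun _ _ => mul_nonneg) (n • c - 1)
  have hexp : (n • c - 1) * (n • c - 1) = 1 - (n • c + n • c) := by
    simp only [sub_mul, mul_sub, smul_mul_assoc, mul_smul_comm, h, smul_zero, one_mul, mul_one]
    module
  rw [hexp, sub_nonneg] at hsq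
  exact (le_add_of_nonneg_left (nsmul_nonneg hc n)).trans hsq

lemma inf_eq_zero_of_mul_eq_zero (hf : FAlgebraAxiom R) (harch : IsArchimedeanLattice R)
    {u v : R} (hu : 0 ≤ u) (hv : 0 ≤ v) (h : u * v = 0) : u ⊓ v = 0 := by
  have hc : 0 ≤ u ⊓ v := le_inf hu hv
  refine hf.eq_zero_of_mul_self_eq_zero harch hc (le_antisymm ?_ (mul_nonneg hc hc))
  calc (u ⊓ v) * (u ⊓ v) ≤ u * v := mul_le_mul inf_le_left inf_le_right hc hu
    _ = 0 := h

end FAlgebraAxiom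

section OrderedAlgebra

variable {R : Type*} [Ring R] [Lattice R] [IsOrderedRing R] [Algebra ℝ R]

lemma abs_mul_le_smul {x y : R} {c : ℝ} (hx : 0 ≤ x) (hy : |y| ≤ c • 1) : |x * y| ≤ c • x :=
  calc |x * y| ≤ x * |y| := abs_le'.2 ⟨mul_le_mul_of_nonneg_left (le_abs_self y) hx,
        by rw [← mul_neg]; exact mul_le_mul_of_nonneg_left (neg_le_abs y) hx⟩
    _ ≤ x * (c • 1) := mul_le_mul_of_nonneg_left hy hx
    _ = c • x := by rw [mul_smul_comm, mul_one]

end OrderedAlgebra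

def markovOperators (A B : Type*) [Semiring A] [PartialOrder A] [Algebra ℝ A] [Semiring B]
    [PartialOrder B] [Algebra ℝ B] : Set (A →ₗ[ℝ] B) :=
  {S | (∀ a : A, 0 ≤ a → 0 ≤ S a) ∧ S 1 = 1}

namespace markovOperators

variable {A B : Type*} [Ring A] [Lattice A] [Algebra ℝ A] [Ring B] [Lattice B] [IsOrderedRing B]
  [Algebra ℝ B] {T : A →ₗ[ℝ] B}

lemma eq_zero_of_abs_le (hT : T ∈ (markovOperators A B).extremePoints ℝ) {D : A →ₗ[ℝ] B}
    (hD1 : D 1 = 0) (hD : ∀ x, 0 ≤ x → |D x| ≤ T x) : D = 0 := by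
  have hadd : T + D ∈ markovOperators A B :=
    ⟨fun x hx => neg_le_iff_add_nonneg.1 (abs_le'.1 (hD x hx)).2,
      by simp [hT.1.2, hD1]⟩
  have hsub : T - D ∈ markovOperators A B :=
    ⟨fun x hx => sub_nonneg.2 (abs_le'.1 (hD x hx)).1, by simp [hT.1.2, hD1]⟩
  simpa using hT.2 hadd hsub (mem_openSegment_add_sub T D)

variable [IsOrderedRing A]

lemma monotone (hT : T ∈ markovOperators A B) : Monotone T := fun x y h => by
  simpa using hT.1 (y - x) (sub_nonneg.2 h)

lemma abs_map_le_map_abs (hT : T ∈ markovOperators A B) (x : A) : |T x| ≤ T |x| :=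
  abs_le'.2 ⟨monotone hT (le_abs_self x), by rw [← map_neg]; exact monotone hT (neg_le_abs x)⟩

theorem map_mul_of_mem_extremePoints [IsOrderedModule ℝ B]
    (hT : T ∈ (markovOperators A B).extremePoints ℝ) {h : A} {c : ℝ} (hc : 0 < c)
    (hh : |h| ≤ c • 1) (x : A) : T (x * h) = T x * T h := by
  set D : A →ₗ[ℝ] B := T ∘ₗ LinearMap.mulRight ℝ h - LinearMap.mulRight ℝ (T h) ∘ₗ T
  have hD : ∀ y, D y = T (y * h) - T y * T h := fun _ => rfl
  have hTh : |T h| ≤ c • 1 := by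
    calc |T h| ≤ T |h| := abs_map_le_map_abs hT.1 h
      _ ≤ T (c • 1) := monotone hT.1 hh
      _ = c • 1 := by rw [map_smul, hT.1.2]
  have hbound (y : A) (hy : 0 ≤ y) : |D y| ≤ (2 * c) • T y := by
    calc |D y| ≤ |T (y * h)| + |T y * T h| := by
          rw [hD, sub_eq_add_neg, ← abs_neg (T y * T h)]; exact abs_add_le _ _
      _ ≤ c • T y + c • T y := add_le_add
          ((abs_map_le_map_abs hT.1 _).trans ((monotone hT.1 (abs_mul_le_smul hy hh)).trans_eq
            (map_smul T c y)))
          (abs_mul_le_smul (hT.1.1 y hy) hTh)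
      _ = (2 * c) • T y := by rw [← add_smul, two_mul]
  have hscaled : (2 * c)⁻¹ • D = 0 := by
    refine eq_zero_of_abs_le hT (by simp [hD, hT.1.2]) fun y hy => ?_
    calc |(2 * c)⁻¹ • D y| ≤ (2 * c)⁻¹ • |D y| := abs_smul_le_smul_abs (by positivity) _
      _ ≤ (2 * c)⁻¹ • (2 * c) • T y := smul_le_smul_of_nonneg_left (hbound y hy) (by positivity)
      _ = T y := inv_smul_smul₀ (by positivity) _
  have hD0 : D = 0 := by simpa [hc.ne'] using hscaled
  simpa [hD, sub_eq_zero] using LinearMap.congr_fun hD0 x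

theorem map_posPart_inf_map_negPart_eq_zero [IsOrderedModule ℝ B] (hfA : FAlgebraAxiom A)
    (hfB : FAlgebraAxiom B) (harchB : IsArchimedeanLattice B)
    (hT : T ∈ (markovOperators A B).extremePoints ℝ)
    {z : A} {c : ℝ} (hc : 0 < c) (hz : z⁻ ≤ c • 1) : T z⁺ ⊓ T z⁻ = 0 := by
  refine hfB.inf_eq_zero_of_mul_eq_zero harchB (hT.1.1 _ (posPart_nonneg z))
    (hT.1.1 _ (negPart_nonneg z)) ?_
  rw [← map_mul_of_mem_extremePoints hT hc (by rwa [abs_of_nonneg (negPart_nonneg z)]),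
    hfA.mul_eq_zero_of_inf_eq_zero (posPart_inf_negPart_eq_zero z), map_zero]

theorem map_abs_of_mem_extremePoints [IsOrderedModule ℝ B] (hfA : FAlgebraAxiom A)
    (hfB : FAlgebraAxiom B) (harchB : IsArchimedeanLattice B)
    (hT : T ∈ (markovOperators A B).extremePoints ℝ) {h : A}
    {c : ℝ} (hc : 0 < c) (hh : |h| ≤ c • 1) : T |h| = |T h| := by
  have hneg : h⁻ ≤ c • 1 := (le_add_of_nonneg_left (posPart_nonneg h)).trans
    ((posPart_add_negPart h).trans_le hh)
  rw [← posPart_add_negPart h, map_add,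
    ← abs_sub_eq_add_of_inf_eq_zero (map_posPart_inf_map_negPart_eq_zero hfA hfB harchB hT hc hneg),
    ← map_sub, posPart_sub_negPart]

variable [IsOrderedModule ℝ A] [IsOrderedModule ℝ B]

theorem le_map_posPart_abs_sub_of_mem_extremePoints (hfA : FAlgebraAxiom A)
    (hfB : FAlgebraAxiom B) (harchB : IsArchimedeanLattice B)
    (hT : T ∈ (markovOperators A B).extremePoints ℝ) {a : A} {w : B}
    (hw : ∀ l : ℝ, w ≤ T |a - l • 1|) {N : ℝ} (hN : 0 < N) : w ≤ T (|a| - N • 1)⁺ := by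
  set h := a ⊓ N • 1 ⊔ -(N • 1)
  have abs_smul_one (r : ℝ) : |r • (1 : A)| ≤ |r| • 1 :=
    abs_le'.2 ⟨smul_le_smul_of_nonneg_right (le_abs_self r) zero_le_one,
      by rw [← neg_smul]; exact smul_le_smul_of_nonneg_right (neg_le_abs r) zero_le_one⟩
  rw [← sub_nonpos]
  refine nonpos_of_forall_le_abs_sub_smul harchB zero_le_one
    (fun c hc => hfB.eq_zero_of_inf_one_eq_zero hc) (b := T h) fun l => ?_
  have hbound : |h - l • 1| ≤ (N + |l|) • (1 : A) := by
    calc |h - l • 1| = |h + (-l) • 1| := by rw [neg_smul, sub_eq_add_neg]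
      _ ≤ |h| + |(-l) • (1 : A)| := abs_add_le _ _
      _ ≤ N • 1 + |l| • 1 := add_le_add (abs_inf_sup_neg_le (smul_nonneg hN.le zero_le_one) a)
          ((abs_smul_one _).trans_eq (by rw [abs_neg]))
      _ = (N + |l|) • 1 := (add_smul _ _ _).symm
  have hsplit : |a - l • 1| ≤ |h - l • 1| + (|a| - N • 1)⁺ := by
    calc |a - l • 1| = |(a - h) + (h - l • 1)| := by rw [sub_add_sub_cancel]
      _ ≤ |a - h| + |h - l • 1| := abs_add_le _ _
      _ ≤ |h - l • 1| + (|a| - N • 1)⁺ := by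
          rw [add_comm]; gcongr; exact abs_sub_inf_sup_neg_le a _
  calc w - T (|a| - N • 1)⁺ ≤ T |a - l • 1| - T (|a| - N • 1)⁺ := sub_le_sub_right (hw l) _
    _ ≤ T |h - l • 1| := by rw [sub_le_iff_le_add, ← map_add]; exact monotone hT.1 hsplit
    _ = |T h - l • 1| := by
        rw [map_abs_of_mem_extremePoints hfA hfB harchB hT (by positivity) hbound, map_sub,
          map_smul, hT.1.2]

theorem nonpos_of_forall_le_map_abs_sub_of_mem_extremePoints (hfA : FAlgebraAxiom A)
    (hfB : FAlgebraAxiom B) (harchB : IsArchimedeanLattice B)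
    (hT : T ∈ (markovOperators A B).extremePoints ℝ) {a : A} {w : B}
    (hw : ∀ l : ℝ, w ≤ T |a - l • 1|) : w ≤ 0 := by
  have hTa : 0 ≤ T |a| := hT.1.1 _ (abs_nonneg a)
  have hs : w⁺ ⊓ 1 ≤ 0 := by
    refine harchB.nonpos_of_forall_smul_le hTa fun n hn =>
      smul_le_of_inf_posPart_nonpos (Nat.one_le_cast.2 hn) hTa inf_le_right ?_
    have hN : (0 : ℝ) < n := by exact_mod_cast hn
    set N : ℝ := (n : ℝ)
    have hneg : (|a| - N • 1)⁻ ≤ N • 1 :=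
      sup_le (by rw [neg_sub]; exact sub_le_self _ (abs_nonneg a)) (smul_nonneg hN.le zero_le_one)
    have hTneg : (N • 1 - T |a|)⁺ ≤ T (|a| - N • 1)⁻ := by
      refine sup_le ?_ (hT.1.1 _ (negPart_nonneg _))
      calc N • 1 - T |a| = T (-(|a| - N • 1)) := by rw [neg_sub, map_sub, map_smul, hT.1.2]
        _ ≤ T (|a| - N • 1)⁻ := monotone hT.1 (neg_le_negPart _)
    calc w⁺ ⊓ 1 ⊓ (N • 1 - T |a|)⁺ ≤ T (|a| - N • 1)⁺ ⊓ T (|a| - N • 1)⁻ :=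
          inf_le_inf (inf_le_left.trans (sup_le
            (le_map_posPart_abs_sub_of_mem_extremePoints hfA hfB harchB hT hw hN)
            (hT.1.1 _ (posPart_nonneg _)))) hTneg
      _ = 0 := map_posPart_inf_map_negPart_eq_zero hfA hfB harchB hT hN hneg
  exact posPart_eq_zero.1 (hfB.eq_zero_of_inf_one_eq_zero (posPart_nonneg w)
    (le_antisymm hs (le_inf (posPart_nonneg w) zero_le_one)))

end markovOperators

theorem stmt_5_general
    {A B : Type*}
    [Ring A] [Lattice A] [Algebra ℝ A] [CovariantClass A A (· + ·) (· ≤ ·)]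
    -- A is a Riesz space (vector lattice) over ℝ
    (hsmulA : ∀ (r : ℝ) (x : A), 0 ≤ r → 0 ≤ x → 0 ≤ r • x)
    -- A is a lattice-ordered algebra
    (hmulA : ∀ x y : A, 0 ≤ x → 0 ≤ y → 0 ≤ x * y)
    -- the f-algebra condition
    (hfA : ∀ x y z : A, 0 ≤ z → x ⊓ y = 0 → (x * z) ⊓ y = 0 ∧ (z * x) ⊓ y = 0)
    [Ring B] [Lattice B] [Algebra ℝ B] [CovariantClass B B (· + ·) (· ≤ ·)]
    -- B is a Riesz space (vector lattice) over ℝ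
    (hsmulB : ∀ (r : ℝ) (x : B), 0 ≤ r → 0 ≤ x → 0 ≤ r • x)
    -- B is a lattice-ordered algebra
    (hmulB : ∀ x y : B, 0 ≤ x → 0 ≤ y → 0 ≤ x * y)
    -- the f-algebra condition
    (hfB : ∀ x y z : B, 0 ≤ z → x ⊓ y = 0 → (x * z) ⊓ y = 0 ∧ (z * x) ⊓ y = 0)
    -- B is Archimedean
    (harchB : ∀ x y : B, (∀ n : ℕ, n • x ≤ y) → x ≤ 0)
    (T : A →ₗ[ℝ] B)
    -- T is an extreme point of the set of Markov operators
    (hext : T ∈ Set.extremePoints ℝ {S : A →ₗ[ℝ] B | (∀ a : A, 0 ≤ a → 0 ≤ S a) ∧ S 1 = 1}) :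
    ∀ a : A, IsGLB {x : B | ∃ l : ℝ, x = T |a - l • (1 : A)|} 0 := by
  have := FAlgebraAxiom.isOrderedRing hmulA hfA
  have := FAlgebraAxiom.isOrderedRing hmulB hfB
  have := IsOrderedModule.of_smul_nonneg (α := ℝ) (β := A) fun r hr x hx => hsmulA r x hr hx
  have := IsOrderedModule.of_smul_nonneg (α := ℝ) (β := B) fun r hr x hx => hsmulB r x hr hx
  intro a
  refine ⟨?_, fun w hw => ?_⟩
  · rintro _ ⟨l, rfl⟩
    exact hext.1.1 _ (abs_nonneg _)
  · exact markovOperators.nonpos_of_forall_le_map_abs_sub_of_mem_extremePoints hfA hfB harchB hext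
      fun l => hw ⟨l, rfl⟩

/-- If a Markov operator `T` between unital Archimedean `f`-algebras with point
separating order duals is an extreme point of the set of Markov operators, then
`inf {T |a - λ • 1| : λ ∈ ℝ} = 0` for every `a`. -/
theorem stmt_5
    {A B : Type*}
    [Ring A] [Lattice A] [Algebra ℝ A] [CovariantClass A A (· + ·) (· ≤ ·)]
    -- A is a Riesz space (vector lattice) over ℝ
    (hsmulA : ∀ (r : ℝ) (x : A), 0 ≤ r → 0 ≤ x → 0 ≤ r • x)
    -- A is a lattice-ordered algebra
    (hmulA : ∀ x y : A, 0 ≤ x → 0 ≤ y → 0 ≤ x * y)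
    -- the f-algebra condition
    (hfA : ∀ x y z : A, 0 ≤ z → x ⊓ y = 0 → (x * z) ⊓ y = 0 ∧ (z * x) ⊓ y = 0)
    -- A is Archimedean
    (harchA : ∀ x y : A, (∀ n : ℕ, n • x ≤ y) → x ≤ 0)
    -- the order dual of A separates the points of A
    (hsepA : ∀ x : A, x ≠ 0 → ∃ f : A →ₗ[ℝ] ℝ, Monotone f ∧ f x ≠ 0)
    [Ring B] [Lattice B] [Algebra ℝ B] [CovariantClass B B (· + ·) (· ≤ ·)]
    -- B is a Riesz space (vector lattice) over ℝ
    (hsmulB : ∀ (r : ℝ) (x : B), 0 ≤ r → 0 ≤ x → 0 ≤ r • x)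
    -- B is a lattice-ordered algebra
    (hmulB : ∀ x y : B, 0 ≤ x → 0 ≤ y → 0 ≤ x * y)
    -- the f-algebra condition
    (hfB : ∀ x y z : B, 0 ≤ z → x ⊓ y = 0 → (x * z) ⊓ y = 0 ∧ (z * x) ⊓ y = 0)
    -- B is Archimedean
    (harchB : ∀ x y : B, (∀ n : ℕ, n • x ≤ y) → x ≤ 0)
    -- the order dual of B separates the points of B
    (hsepB : ∀ x : B, x ≠ 0 → ∃ f : B →ₗ[ℝ] ℝ, Monotone f ∧ f x ≠ 0)
    (T : A →ₗ[ℝ] B)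
    -- T is a Markov operator
    (hTpos : ∀ a : A, 0 ≤ a → 0 ≤ T a) (hT1 : T 1 = 1)
    -- T is an extreme point of the set of Markov operators
    (hext : T ∈ Set.extremePoints ℝ {S : A →ₗ[ℝ] B | (∀ a : A, 0 ≤ a → 0 ≤ S a) ∧ S 1 = 1}) :
    ∀ a : A, IsGLB {x : B | ∃ l : ℝ, x = T |a - l • (1 : A)|} 0 :=
  stmt_5_general hsmulA hmulA hfA hsmulB hmulB hfB harchB T hext
end

section
/- Let A and B be Archimedean f-algebras with unit elements e_A and e_B respectively (and point separating order duals), and let T : A → B be a Markov operator. If inf{ T|a − λe_A| : λ ∈ ℝ } = 0 in B for every a ∈ A, then T is a lattice homomorphism, i.e. T|a| = |Ta| for all a ∈ A. -/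
/-!
Positivity of `T` gives `|T a| ≤ T |a|`. Conversely, for every `λ` the triangle inequality, first
in `A` and then in `B`, gives `T |a| ≤ T |a - λ e| + |λ| T e ≤ |T a| + 2 T |a - λ e|`, so the gap
`T |a| - |T a| ≥ 0` is at most twice every element of a set whose infimum is `0`, hence vanishes.
Here `e = 1` is positive because `1⁻ * 1⁺ = 1⁻ + 1⁻ * 1⁻ ≥ 1⁻`, while the `f`-algebra condition
makes `1⁻ * 1⁺` disjoint from `1⁻`.
-/

lemma one_nonneg_of_mul_inf_eq_zero {A : Type*} [Ring A] [Lattice A] [AddLeftMono A]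
    (hmul : ∀ x y : A, 0 ≤ x → 0 ≤ y → 0 ≤ x * y)
    (hf : ∀ x y z : A, 0 ≤ z → x ⊓ y = 0 → (z * x) ⊓ y = 0) : (0 : A) ≤ 1 := by
  have hdisj : (1 : A)⁻ * 1⁺ ⊓ 1⁻ = 0 :=
    hf _ _ _ (negPart_nonneg 1) (posPart_inf_negPart_eq_zero 1)
  have hle : (1 : A)⁻ ≤ 1⁻ * 1⁺ := by
    have hpos : (1 : A)⁺ = 1 + 1⁻ := eq_add_of_sub_eq (posPart_sub_negPart 1)
    rw [hpos, mul_add, mul_one]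
    exact le_add_of_nonneg_right (hmul _ _ (negPart_nonneg 1) (negPart_nonneg 1))
  rw [inf_eq_right.2 hle] at hdisj
  exact negPart_eq_zero.1 hdisj

lemma PositiveLinearMap.abs_map_le_map_abs {R E F : Type*} [Semiring R]
    [AddCommGroup E] [Lattice E] [IsOrderedAddMonoid E] [Module R E]
    [AddCommGroup F] [Lattice F] [IsOrderedAddMonoid F] [Module R F]
    (T : E →ₚ[R] F) (x : E) : |T x| ≤ T |x| :=
  abs_le'.2
    ⟨OrderHomClass.mono T (le_abs_self x), by simpa using OrderHomClass.mono T (neg_le_abs x)⟩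

section

variable {E F : Type*} [AddCommGroup E] [Lattice E] [IsOrderedAddMonoid E] [Module ℝ E]
  [PosSMulMono ℝ E] [AddCommGroup F] [Lattice F] [IsOrderedAddMonoid F] [Module ℝ F]
  [PosSMulMono ℝ F]

lemma abs_smul_of_nonneg_right (r : ℝ) {e : E} (he : 0 ≤ e) : |r • e| = |r| • e := by
  rcases le_total 0 r with hr | hr
  · rw [abs_of_nonneg hr, abs_of_nonneg (smul_nonneg hr he)]
  · rw [abs_of_nonpos hr, abs_of_nonpos (smul_nonpos_of_nonpos_of_nonneg hr he), neg_smul]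

namespace PositiveLinearMap

lemma map_abs_sub_abs_map_le (T : E →ₚ[ℝ] F) {e : E} (he : 0 ≤ e) (x : E) (r : ℝ) :
    T |x| - |T x| ≤ 2 • T |x - r • e| := by
  have hTe : 0 ≤ T e := T.map_nonneg he
  have hx_le : T |x| ≤ T |x - r • e| + |r| • T e := by
    calc T |x| ≤ T (|x - r • e| + |r • e|) :=
          OrderHomClass.mono T (by simpa using abs_add_le (x - r • e) (r • e))
      _ = T |x - r • e| + |r| • T e := by rw [map_add, abs_smul_of_nonneg_right r he, map_smul]
  have hre_le : |r| • T e ≤ |T x| + T |x - r • e| := by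
    calc |r| • T e = |T x + -T (x - r • e)| := by
          rw [← abs_smul_of_nonneg_right r hTe, ← map_smul, ← map_neg, ← map_add, neg_sub,
            add_sub_cancel]
      _ ≤ |T x| + |T (x - r • e)| := (abs_add_le _ _).trans_eq (by rw [abs_neg])
      _ ≤ |T x| + T |x - r • e| := add_le_add_right (abs_map_le_map_abs T _) _
  rw [sub_le_iff_le_add, two_nsmul]
  calc T |x| ≤ T |x - r • e| + (|T x| + T |x - r • e|) :=
        hx_le.trans (add_le_add_right hre_le _)
    _ = _ := by abel

lemma map_abs_eq_abs_map_of_isGLB (T : E →ₚ[ℝ] F) {e : E} (he : 0 ≤ e) (x : E)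
    (h : IsGLB {y | ∃ r : ℝ, y = T |x - r • e|} 0) : T |x| = |T x| := by
  have hhalf : (2⁻¹ : ℝ) • (T |x| - |T x|) ≤ 0 := h.2 <| by
    rintro _ ⟨r, rfl⟩
    calc _ ≤ (2⁻¹ : ℝ) • (2 • T |x - r • e|) :=
          smul_le_smul_of_nonneg_left (map_abs_sub_abs_map_le T he x r) (by norm_num)
      _ = T |x - r • e| := by rw [← ofNat_smul_eq_nsmul ℝ, smul_smul]; norm_num
  have hgap : T |x| - |T x| ≤ 0 := by
    simpa [smul_smul] using smul_le_smul_of_nonneg_left hhalf (zero_le_two (α := ℝ))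
  exact le_antisymm (sub_nonpos.1 hgap) (abs_map_le_map_abs T x)

end PositiveLinearMap

end

theorem stmt_6_general
    {A B : Type*}
    [Ring A] [Lattice A] [Algebra ℝ A] [CovariantClass A A (· + ·) (· ≤ ·)]
    -- A is a Riesz space (vector lattice) over ℝ
    (hsmulA : ∀ (r : ℝ) (x : A), 0 ≤ r → 0 ≤ x → 0 ≤ r • x)
    -- A is a lattice-ordered algebra
    (hmulA : ∀ x y : A, 0 ≤ x → 0 ≤ y → 0 ≤ x * y)
    -- the f-algebra condition
    (hfA : ∀ x y z : A, 0 ≤ z → x ⊓ y = 0 → (x * z) ⊓ y = 0 ∧ (z * x) ⊓ y = 0)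
    [Ring B] [Lattice B] [Algebra ℝ B] [CovariantClass B B (· + ·) (· ≤ ·)]
    -- B is a Riesz space (vector lattice) over ℝ
    (hsmulB : ∀ (r : ℝ) (x : B), 0 ≤ r → 0 ≤ x → 0 ≤ r • x)
    (T : A →ₗ[ℝ] B)
    -- T is a Markov operator
    (hTpos : ∀ a : A, 0 ≤ a → 0 ≤ T a)
    (hinf : ∀ a : A, IsGLB {x : B | ∃ l : ℝ, x = T |a - l • (1 : A)|} 0) :
    ∀ a : A, T |a| = |T a| := by
  have : IsOrderedAddMonoid A := { add_le_add_left := fun _ _ h c => add_le_add_left h c }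
  have : IsOrderedAddMonoid B := { add_le_add_left := fun _ _ h c => add_le_add_left h c }
  have : PosSMulMono ℝ A := .of_smul_nonneg fun r hr x hx => hsmulA r x hr hx
  have : PosSMulMono ℝ B := .of_smul_nonneg fun r hr x hx => hsmulB r x hr hx
  have hA1 : (0 : A) ≤ 1 :=
    one_nonneg_of_mul_inf_eq_zero hmulA fun x y z hz hxy => (hfA x y z hz hxy).2
  exact fun a => (PositiveLinearMap.mk₀ T hTpos).map_abs_eq_abs_map_of_isGLB hA1 a (hinf a)

/-- If a Markov operator `T` between unital Archimedean `f`-algebras with point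
separating order duals satisfies `inf {T |a - λ • 1| : λ ∈ ℝ} = 0` for every
`a`, then `T` is a lattice homomorphism. -/
theorem stmt_6
    {A B : Type*}
    [Ring A] [Lattice A] [Algebra ℝ A] [CovariantClass A A (· + ·) (· ≤ ·)]
    -- A is a Riesz space (vector lattice) over ℝ
    (hsmulA : ∀ (r : ℝ) (x : A), 0 ≤ r → 0 ≤ x → 0 ≤ r • x)
    -- A is a lattice-ordered algebra
    (hmulA : ∀ x y : A, 0 ≤ x → 0 ≤ y → 0 ≤ x * y)
    -- the f-algebra condition
    (hfA : ∀ x y z : A, 0 ≤ z → x ⊓ y = 0 → (x * z) ⊓ y = 0 ∧ (z * x) ⊓ y = 0)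
    -- A is Archimedean
    (harchA : ∀ x y : A, (∀ n : ℕ, n • x ≤ y) → x ≤ 0)
    -- the order dual of A separates the points of A
    (hsepA : ∀ x : A, x ≠ 0 → ∃ f : A →ₗ[ℝ] ℝ, Monotone f ∧ f x ≠ 0)
    [Ring B] [Lattice B] [Algebra ℝ B] [CovariantClass B B (· + ·) (· ≤ ·)]
    -- B is a Riesz space (vector lattice) over ℝ
    (hsmulB : ∀ (r : ℝ) (x : B), 0 ≤ r → 0 ≤ x → 0 ≤ r • x)
    -- B is a lattice-ordered algebra
    (hmulB : ∀ x y : B, 0 ≤ x → 0 ≤ y → 0 ≤ x * y)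
    -- the f-algebra condition
    (hfB : ∀ x y z : B, 0 ≤ z → x ⊓ y = 0 → (x * z) ⊓ y = 0 ∧ (z * x) ⊓ y = 0)
    -- B is Archimedean
    (harchB : ∀ x y : B, (∀ n : ℕ, n • x ≤ y) → x ≤ 0)
    -- the order dual of B separates the points of B
    (hsepB : ∀ x : B, x ≠ 0 → ∃ f : B →ₗ[ℝ] ℝ, Monotone f ∧ f x ≠ 0)
    (T : A →ₗ[ℝ] B)
    -- T is a Markov operator
    (hTpos : ∀ a : A, 0 ≤ a → 0 ≤ T a) (hT1 : T 1 = 1)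
    (hinf : ∀ a : A, IsGLB {x : B | ∃ l : ℝ, x = T |a - l • (1 : A)|} 0) :
    ∀ a : A, T |a| = |T a| :=
  stmt_6_general hsmulA hmulA hfA hsmulB T hTpos hinf
end

section
/- Let A and B be Archimedean semiprime f-algebras with point separating order duals and with weak order units e_A and e_B respectively, and let T : A → B be a weak Markov operator. If T is a lattice homomorphism, then T is an extreme point of the convex set of all weak Markov operators from A to B. -/
/-!
Write `T = θ S + (1 - θ) S'` with `S, S'` weak Markov and `0 < θ < 1`; then `0 ≤ S ≤ θ⁻¹ T` on
the positive cone, and it suffices to show that such an `S` with `S e_A = e_B` equals `T`.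
Because `T` is a lattice homomorphism, operators dominated by a multiple of `T` send disjoint
elements to disjoint elements. For `0 ≤ a ≤ m e_A` cut `n a` into the layers
`u_k = (n a - k e_A)⁺ ⊓ e_A`, `k < n m`. Since `u_{k+1}` is disjoint from `e_A - u_k`, the
`f`-algebra property makes the defects `D_k = S u_k - T u_k` pairwise orthogonal, so
`n² (S a - T a)² = ∑ D_k² ≤ n m e_B²`; the Archimedean property and semiprimeness give `S a = T a`.
A general `a ≥ 0` differs from `a ⊓ m e_A` by an element on which `|S - T|` is at most
`θ⁻¹ (T a - m e_B)⁺`, and the only positive element below all of these is `0`, because `e_B` is a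
weak order unit.
-/

section LatticeOrderedGroup

variable {E : Type*} [AddCommGroup E] [Lattice E] {e x : E}

def layer (e x : E) (k : ℕ) : E := (x - k • e)⁺ ⊓ e

theorem layer_nonneg (he : 0 ≤ e) (x : E) (k : ℕ) : 0 ≤ layer e x k :=
  le_inf (posPart_nonneg _) he

theorem layer_le (e x : E) (k : ℕ) : layer e x k ≤ e := inf_le_right

variable [IsOrderedAddMonoid E]

theorem abs_sub_le_of_nonneg_of_le' {a b n : E} (ha : 0 ≤ a) (han : a ≤ n) (hb : 0 ≤ b)
    (hbn : b ≤ n) : |a - b| ≤ n :=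
  abs_le'.2 ⟨(sub_le_self a hb).trans han, by rw [neg_sub]; exact (sub_le_self b ha).trans hbn⟩

theorem layer_antitone (he : 0 ≤ e) (x : E) : Antitone (layer e x) := fun _ _ hjk =>
  inf_le_inf_right e (posPart_mono (sub_le_sub_left (nsmul_le_nsmul_left he hjk) x))

theorem inf_nsmul_add_layer (he : 0 ≤ e) (x : E) (k : ℕ) :
    x ⊓ k • e + layer e x k = x ⊓ (k + 1) • e := by
  set y := x ⊓ (k + 1) • e
  have hlayer : layer e x k = (y - k • e)⁺ := by
    rw [layer, inf_sub, succ_nsmul, add_sub_cancel_left, posPart_def, posPart_def,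
      @inf_sup_right E (AddCommGroup.toDistribLattice E), inf_eq_left.2 he]
  have hinf : x ⊓ k • e = y ⊓ k • e := by
    rw [inf_assoc, inf_eq_right.2 (nsmul_le_nsmul_left he k.le_succ)]
  rw [hlayer, hinf, posPart_def, sup_comm, ← sub_self y, ← sub_inf]
  abel

theorem sum_range_layer (he : 0 ≤ e) (hx : 0 ≤ x) (n : ℕ) :
    ∑ k ∈ Finset.range n, layer e x k = x ⊓ n • e := by
  induction n with
  | zero => simp [inf_eq_right.2 hx]
  | succ n ih => rw [Finset.sum_range_succ, ih, inf_nsmul_add_layer he]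

theorem layer_succ_inf_sub_layer (he : 0 ≤ e) (x : E) (k : ℕ) :
    layer e x (k + 1) ⊓ (e - layer e x k) = 0 := by
  set w := x - (k + 1) • e
  have hcompl : e - layer e x k ≤ w⁻ := calc
    e - layer e x k ≤ e - (x - k • e) ⊓ e := sub_le_sub_left (inf_le_inf_right e (le_posPart _)) e
    _ = w⁻ := by
      rw [sub_inf, sub_self, negPart_def]
      congr 1
      simp only [w, succ_nsmul]
      abel
  refine le_antisymm ?_ (le_inf (layer_nonneg he x _) (sub_nonneg.2 (layer_le e x k)))
  exact (inf_le_inf inf_le_left hcompl).trans (posPart_inf_negPart_eq_zero w).le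

theorem nsmul_layer_le (he : 0 ≤ e) (hx : 0 ≤ x) (n : ℕ) : n • layer e x n ≤ x := calc
  n • layer e x n = ∑ _k ∈ Finset.range n, layer e x n := by simp
  _ ≤ ∑ k ∈ Finset.range n, layer e x k :=
    Finset.sum_le_sum fun k hk => layer_antitone he x (Finset.mem_range.1 hk).le
  _ = x ⊓ n • e := sum_range_layer he hx n
  _ ≤ x := inf_le_left

theorem eq_zero_of_forall_le_posPart_sub_nsmul
    (harch : ∀ x y : E, (∀ n : ℕ, n • x ≤ y) → x ≤ 0) (hwou : ∀ x : E, |x| ⊓ e = 0 → x = 0)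
    (he : 0 ≤ e) (hx : 0 ≤ x) {v : E} (hv : 0 ≤ v) (h : ∀ n : ℕ, v ≤ (x - n • e)⁺) : v = 0 := by
  have hbdd : ∀ n : ℕ, n • (v ⊓ e) ≤ x := fun n =>
    (nsmul_le_nsmul_right (inf_le_inf_right e (h n)) n).trans (nsmul_layer_le he hx n)
  refine hwou v ?_
  rw [abs_of_nonneg hv]
  exact le_antisymm (harch _ x hbdd) (le_inf hv he)

end LatticeOrderedGroup

namespace FAlgebra

variable {B : Type*} [Ring B] [Lattice B]

theorem mul_eq_zero_of_inf_eq_zero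
    (hf : ∀ x y z : B, 0 ≤ z → x ⊓ y = 0 → (x * z) ⊓ y = 0 ∧ (z * x) ⊓ y = 0)
    {x y : B} (hx : 0 ≤ x) (hy : 0 ≤ y) (h : x ⊓ y = 0) : x * y = 0 := by
  have hy_xy : y ⊓ (x * y) = 0 := by rw [inf_comm]; exact (hf x y y hy h).1
  simpa using (hf y (x * y) x hx hy_xy).2

variable [IsOrderedAddMonoid B]

theorem mul_self_eq
    (hf : ∀ x y z : B, 0 ≤ z → x ⊓ y = 0 → (x * z) ⊓ y = 0 ∧ (z * x) ⊓ y = 0) (x : B) :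
    x * x = x⁺ * x⁺ + x⁻ * x⁻ := by
  have hdisj := posPart_inf_negPart_eq_zero x
  conv_lhs => rw [← posPart_sub_negPart x]
  rw [sub_mul, mul_sub, mul_sub,
    mul_eq_zero_of_inf_eq_zero hf (posPart_nonneg x) (negPart_nonneg x) hdisj,
    mul_eq_zero_of_inf_eq_zero hf (negPart_nonneg x) (posPart_nonneg x) (inf_comm x⁺ x⁻ ▸ hdisj)]
  abel

variable [PosMulMono B]

theorem mul_self_nonneg
    (hf : ∀ x y z : B, 0 ≤ z → x ⊓ y = 0 → (x * z) ⊓ y = 0 ∧ (z * x) ⊓ y = 0) (x : B) :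
    0 ≤ x * x := by
  rw [mul_self_eq hf]
  exact add_nonneg (mul_nonneg (posPart_nonneg x) (posPart_nonneg x))
    (mul_nonneg (negPart_nonneg x) (negPart_nonneg x))

theorem mul_self_le_mul_self_of_abs_le [MulPosMono B]
    (hf : ∀ x y z : B, 0 ≤ z → x ⊓ y = 0 → (x * z) ⊓ y = 0 ∧ (z * x) ⊓ y = 0)
    {x z : B} (h : |x| ≤ z) : x * x ≤ z * z := by
  have hpos : x⁺ ≤ z := (posPart_add_negPart x ▸ le_add_of_nonneg_right (negPart_nonneg x)).trans h
  have hneg : x⁻ ≤ z := (posPart_add_negPart x ▸ le_add_of_nonneg_left (posPart_nonneg x)).trans h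
  calc x * x = x⁺ * x⁺ + x⁻ * x⁻ := mul_self_eq hf x
    _ ≤ z * x⁺ + z * x⁻ := add_le_add (mul_le_mul_of_nonneg_right hpos (posPart_nonneg x))
        (mul_le_mul_of_nonneg_right hneg (negPart_nonneg x))
    _ = z * |x| := by rw [← mul_add, posPart_add_negPart]
    _ ≤ z * z := mul_le_mul_of_nonneg_left h ((abs_nonneg x).trans h)

end FAlgebra

section LatticeHom

variable {A B : Type*} [AddCommGroup A] [Lattice A] [IsOrderedAddMonoid A] [Module ℝ A]
  [AddCommGroup B] [Lattice B] [IsOrderedAddMonoid B] [Module ℝ B]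

theorem LinearMap.map_nonneg_of_map_abs (T : A →ₗ[ℝ] B) (hT : ∀ a, T |a| = |T a|) {a : A}
    (ha : 0 ≤ a) : 0 ≤ T a := by
  rw [← abs_of_nonneg ha, hT]
  exact abs_nonneg _

theorem LinearMap.map_inf_of_map_abs (T : A →ₗ[ℝ] B) (hT : ∀ a, T |a| = |T a|) (x y : A) :
    T (x ⊓ y) = T x ⊓ T y := by
  rw [inf_eq_half_smul_add_sub_abs_sub' ℝ, inf_eq_half_smul_add_sub_abs_sub' ℝ (T x), map_smul,
    map_sub, map_add, hT, map_sub]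

end LatticeHom

section Domination

variable {A B : Type*} [AddCommGroup A] [Lattice A] [IsOrderedAddMonoid A] [Module ℝ A]
  [Ring B] [Lattice B] [IsOrderedAddMonoid B] [Module ℝ B]
  {S T F G : A →ₗ[ℝ] B} {c : ℝ} {eA : A} {eB : B}

def DominatedBy (S T : A →ₗ[ℝ] B) (c : ℝ) : Prop := ∀ x, 0 ≤ x → 0 ≤ S x ∧ S x ≤ c • T x

theorem DominatedBy.map_le_map (hS : DominatedBy S T c) {x y : A} (h : x ≤ y) : S x ≤ S y :=
  sub_nonneg.1 (map_sub S y x ▸ (hS _ (sub_nonneg.2 h)).1)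

variable [PosSMulMono ℝ B]

theorem dominatedBy_self_of_map_abs (hT : ∀ a, T |a| = |T a|) (hc : 1 ≤ c) :
    DominatedBy T T c := fun _ hx =>
  ⟨T.map_nonneg_of_map_abs hT hx, le_smul_of_one_le_left (T.map_nonneg_of_map_abs hT hx) hc⟩

theorem DominatedBy.inf_map_eq_zero (hF : DominatedBy F T c) (hG : DominatedBy G T c)
    (hT : ∀ a, T |a| = |T a|) (hc : 0 < c) {x y : A} (hx : 0 ≤ x) (hy : 0 ≤ y)
    (hxy : x ⊓ y = 0) : F x ⊓ G y = 0 := by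
  refine le_antisymm ?_ (le_inf (hF x hx).1 (hG y hy).1)
  calc F x ⊓ G y ≤ c • T x ⊓ c • T y := inf_le_inf (hF x hx).2 (hG y hy).2
    _ = c • T (x ⊓ y) := by
      rw [T.map_inf_of_map_abs hT]
      exact ((OrderIso.smulRight hc).map_inf _ _).symm
    _ = 0 := by rw [hxy, map_zero, smul_zero]

variable [PosMulMono B] [MulPosMono B]

theorem DominatedBy.map_layer_mul_map_layer
    (hf : ∀ x y z : B, 0 ≤ z → x ⊓ y = 0 → (x * z) ⊓ y = 0 ∧ (z * x) ⊓ y = 0)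
    (hF : DominatedBy F T c) (hG : DominatedBy G T c) (hT : ∀ a, T |a| = |T a|) (hc : 0 < c)
    (heA : 0 ≤ eA) (hGe : G eA = eB) (x : A) {j k : ℕ} (hkj : k < j) :
    F (layer eA x j) * G (layer eA x k) = F (layer eA x j) * eB ∧
      G (layer eA x k) * F (layer eA x j) = eB * F (layer eA x j) := by
  obtain ⟨i, hki, rfl⟩ : ∃ i, k ≤ i ∧ j = i + 1 := ⟨j - 1, by omega, by omega⟩
  set p := F (layer eA x (i + 1))
  have hp : 0 ≤ p := (hF _ (layer_nonneg heA x _)).1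
  have hcompl : G (eA - layer eA x i) = eB - G (layer eA x i) := by rw [map_sub, hGe]
  have hq : 0 ≤ eB - G (layer eA x i) :=
    hcompl ▸ (hG _ (sub_nonneg.2 (layer_le eA x i))).1
  have hdisj : p ⊓ (eB - G (layer eA x i)) = 0 :=
    hcompl ▸ hF.inf_map_eq_zero hG hT hc (layer_nonneg heA x _) (sub_nonneg.2 (layer_le eA x i))
      (layer_succ_inf_sub_layer heA x i)
  have hright : p * eB = p * G (layer eA x i) := sub_eq_zero.1 <| by
    rw [← mul_sub]
    exact FAlgebra.mul_eq_zero_of_inf_eq_zero hf hp hq hdisj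
  have hleft : eB * p = G (layer eA x i) * p := sub_eq_zero.1 <| by
    rw [← sub_mul]
    exact FAlgebra.mul_eq_zero_of_inf_eq_zero hf hq hp (inf_comm p _ ▸ hdisj)
  have hlo : G (layer eA x i) ≤ G (layer eA x k) := hG.map_le_map (layer_antitone heA x hki)
  have hhi : G (layer eA x k) ≤ eB := hGe ▸ hG.map_le_map (layer_le eA x k)
  constructor
  · exact le_antisymm (mul_le_mul_of_nonneg_left hhi hp)
      (hright.trans_le (mul_le_mul_of_nonneg_left hlo hp))
  · exact le_antisymm (mul_le_mul_of_nonneg_right hhi hp)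
      (hleft.trans_le (mul_le_mul_of_nonneg_right hlo hp))

theorem DominatedBy.map_layer_sub_mul_map_layer_sub
    (hf : ∀ x y z : B, 0 ≤ z → x ⊓ y = 0 → (x * z) ⊓ y = 0 ∧ (z * x) ⊓ y = 0)
    (hS : DominatedBy S T c) (hT : ∀ a, T |a| = |T a|) (hc : 1 ≤ c) (heA : 0 ≤ eA)
    (hSe : S eA = eB) (hTe : T eA = eB) (x : A) {j k : ℕ} (hjk : j ≠ k) :
    (S (layer eA x j) - T (layer eA x j)) * (S (layer eA x k) - T (layer eA x k)) = 0 := by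
  have hT' := dominatedBy_self_of_map_abs hT hc
  have hc0 : 0 < c := zero_lt_one.trans_le hc
  rw [sub_mul, mul_sub, mul_sub]
  rcases hjk.lt_or_gt with h | h
  · rw [(hS.map_layer_mul_map_layer hf hS hT hc0 heA hSe x h).2,
      (hT'.map_layer_mul_map_layer hf hS hT hc0 heA hSe x h).2,
      (hS.map_layer_mul_map_layer hf hT' hT hc0 heA hTe x h).2,
      (hT'.map_layer_mul_map_layer hf hT' hT hc0 heA hTe x h).2]
    abel
  · rw [(hS.map_layer_mul_map_layer hf hS hT hc0 heA hSe x h).1,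
      (hS.map_layer_mul_map_layer hf hT' hT hc0 heA hTe x h).1,
      (hT'.map_layer_mul_map_layer hf hS hT hc0 heA hSe x h).1,
      (hT'.map_layer_mul_map_layer hf hT' hT hc0 heA hTe x h).1]
    abel

theorem DominatedBy.nsmul_mul_self_sub_le
    (hf : ∀ x y z : B, 0 ≤ z → x ⊓ y = 0 → (x * z) ⊓ y = 0 ∧ (z * x) ⊓ y = 0)
    (hS : DominatedBy S T c) (hT : ∀ a, T |a| = |T a|) (hc : 1 ≤ c) (heA : 0 ≤ eA)
    (hSe : S eA = eB) (hTe : T eA = eB) {a : A} (ha : 0 ≤ a) {m : ℕ} (ham : a ≤ m • eA)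
    (n : ℕ) : (n * n) • ((S a - T a) * (S a - T a)) ≤ (n * m) • (eB * eB) := by
  set D : ℕ → B := fun k => S (layer eA (n • a) k) - T (layer eA (n • a) k)
  have hsum : ∑ k ∈ Finset.range (n * m), D k = n • (S a - T a) := by
    have hna : n • a ⊓ (n * m) • eA = n • a :=
      inf_eq_left.2 (mul_nsmul' eA n m ▸ nsmul_le_nsmul_right ham n)
    rw [Finset.sum_sub_distrib, ← map_sum, ← map_sum, sum_range_layer heA (nsmul_nonneg ha n),
      hna, map_nsmul, map_nsmul, nsmul_sub]
  have hsq : (n • (S a - T a)) * (n • (S a - T a)) = ∑ k ∈ Finset.range (n * m), D k * D k := by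
    rw [← hsum, Finset.sum_mul_sum]
    exact Finset.sum_congr rfl fun j hj => Finset.sum_eq_single j
      (fun k _ hkj => hS.map_layer_sub_mul_map_layer_sub hf hT hc heA hSe hTe _ hkj.symm)
      (absurd hj)
  have hD : ∀ k, D k * D k ≤ eB * eB := fun k =>
    FAlgebra.mul_self_le_mul_self_of_abs_le hf <| abs_sub_le_of_nonneg_of_le'
      (hS _ (layer_nonneg heA _ k)).1 (hSe ▸ hS.map_le_map (layer_le eA _ k))
      (T.map_nonneg_of_map_abs hT (layer_nonneg heA _ k))
      (hTe ▸ (dominatedBy_self_of_map_abs hT hc).map_le_map (layer_le eA _ k))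
  calc (n * n) • ((S a - T a) * (S a - T a)) = (n • (S a - T a)) * (n • (S a - T a)) :=
        (smul_mul_smul_comm _ _ _ _).symm
    _ = ∑ k ∈ Finset.range (n * m), D k * D k := hsq
    _ ≤ ∑ _k ∈ Finset.range (n * m), eB * eB := Finset.sum_le_sum fun k _ => hD k
    _ = (n * m) • (eB * eB) := by rw [Finset.sum_const, Finset.card_range]

theorem DominatedBy.map_eq_of_le_nsmul
    (hf : ∀ x y z : B, 0 ≤ z → x ⊓ y = 0 → (x * z) ⊓ y = 0 ∧ (z * x) ⊓ y = 0)
    (harch : ∀ x y : B, (∀ n : ℕ, n • x ≤ y) → x ≤ 0) (hsemi : ∀ x : B, x * x = 0 → x = 0)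
    (hS : DominatedBy S T c) (hT : ∀ a, T |a| = |T a|) (hc : 1 ≤ c) (heA : 0 ≤ eA)
    (hSe : S eA = eB) (hTe : T eA = eB) {a : A} (ha : 0 ≤ a) {m : ℕ} (ham : a ≤ m • eA) :
    S a = T a := by
  set d := S a - T a
  have hbdd : ∀ n : ℕ, n • (d * d) ≤ m • (eB * eB) := by
    intro n
    rcases n.eq_zero_or_pos with rfl | hn
    · have heB : 0 ≤ eB := hTe ▸ T.map_nonneg_of_map_abs hT heA
      simpa using nsmul_nonneg (mul_nonneg heB heB) m
    have h := hS.nsmul_mul_self_sub_le hf hT hc heA hSe hTe ha ham n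
    simp only [← Nat.cast_smul_eq_nsmul ℝ, Nat.cast_mul, mul_smul] at h ⊢
    exact (smul_le_smul_iff_of_pos_left (Nat.cast_pos.2 hn)).1 h
  have hdd : d * d = 0 := le_antisymm (harch _ _ hbdd) (FAlgebra.mul_self_nonneg hf d)
  exact sub_eq_zero.1 (hsemi d hdd)

theorem DominatedBy.map_eq_of_nonneg
    (hf : ∀ x y z : B, 0 ≤ z → x ⊓ y = 0 → (x * z) ⊓ y = 0 ∧ (z * x) ⊓ y = 0)
    (harch : ∀ x y : B, (∀ n : ℕ, n • x ≤ y) → x ≤ 0) (hsemi : ∀ x : B, x * x = 0 → x = 0)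
    (hwou : ∀ x : B, |x| ⊓ eB = 0 → x = 0)
    (hS : DominatedBy S T c) (hT : ∀ a, T |a| = |T a|) (hc : 1 ≤ c) (heA : 0 ≤ eA)
    (hSe : S eA = eB) (hTe : T eA = eB) {a : A} (ha : 0 ≤ a) : S a = T a := by
  have hc0 : 0 < c := zero_lt_one.trans_le hc
  have heB : 0 ≤ eB := hTe ▸ T.map_nonneg_of_map_abs hT heA
  set d := S a - T a
  have htail : ∀ m : ℕ, c⁻¹ • |d| ≤ (T a - m • eB)⁺ := by
    intro m
    set r := a - a ⊓ m • eA
    have hr : 0 ≤ r := sub_nonneg.2 inf_le_left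
    have hd : d = S r - T r := by
      have := hS.map_eq_of_le_nsmul hf harch hsemi hT hc heA hSe hTe
        (le_inf ha (nsmul_nonneg heA m)) inf_le_right
      simp only [d, r, map_sub, this]
      abel
    have hTr : T r = (T a - m • eB)⁺ := by
      rw [map_sub, T.map_inf_of_map_abs hT, map_nsmul, hTe, sub_inf, sub_self, posPart_def,
        sup_comm]
    rw [inv_smul_le_iff_of_pos hc0, ← hTr, hd]
    exact abs_sub_le_of_nonneg_of_le' (hS r hr).1 (hS r hr).2
      (T.map_nonneg_of_map_abs hT hr) ((dominatedBy_self_of_map_abs hT hc r hr).2)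
  have hzero := eq_zero_of_forall_le_posPart_sub_nsmul harch hwou heB
    (T.map_nonneg_of_map_abs hT ha) (smul_nonneg (inv_nonneg.2 hc0.le) (abs_nonneg d)) htail
  have habs : |d| = 0 := by simpa [hc0.ne'] using hzero
  refine sub_eq_zero.1 (le_antisymm ((le_abs_self d).trans habs.le) ?_)
  exact neg_nonpos.1 ((neg_le_abs d).trans habs.le)

theorem DominatedBy.eq
    (hf : ∀ x y z : B, 0 ≤ z → x ⊓ y = 0 → (x * z) ⊓ y = 0 ∧ (z * x) ⊓ y = 0)
    (harch : ∀ x y : B, (∀ n : ℕ, n • x ≤ y) → x ≤ 0) (hsemi : ∀ x : B, x * x = 0 → x = 0)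
    (hwou : ∀ x : B, |x| ⊓ eB = 0 → x = 0)
    (hS : DominatedBy S T c) (hT : ∀ a, T |a| = |T a|) (hc : 1 ≤ c) (heA : 0 ≤ eA)
    (hSe : S eA = eB) (hTe : T eA = eB) : S = T := by
  ext a
  rw [← posPart_sub_negPart a, map_sub, map_sub,
    hS.map_eq_of_nonneg hf harch hsemi hwou hT hc heA hSe hTe (posPart_nonneg a),
    hS.map_eq_of_nonneg hf harch hsemi hwou hT hc heA hSe hTe (negPart_nonneg a)]

theorem LinearMap.mem_extremePoints_of_map_abs
    (hf : ∀ x y z : B, 0 ≤ z → x ⊓ y = 0 → (x * z) ⊓ y = 0 ∧ (z * x) ⊓ y = 0)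
    (harch : ∀ x y : B, (∀ n : ℕ, n • x ≤ y) → x ≤ 0) (hsemi : ∀ x : B, x * x = 0 → x = 0)
    (hwou : ∀ x : B, |x| ⊓ eB = 0 → x = 0) (heA : 0 ≤ eA)
    (hT : ∀ a, T |a| = |T a|) (hTe : T eA = eB) :
    T ∈ Set.extremePoints ℝ {S : A →ₗ[ℝ] B | (∀ a : A, 0 ≤ a → 0 ≤ S a) ∧ S eA = eB} := by
  refine mem_extremePoints_iff_left.2 ⟨⟨fun a => T.map_nonneg_of_map_abs hT, hTe⟩, ?_⟩
  rintro S ⟨hSpos, hSe⟩ S' ⟨hS'pos, -⟩ ⟨θ, θ', hθ, hθ', hθθ', rfl⟩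
  have hS : DominatedBy S (θ • S + θ' • S') θ⁻¹ := fun x hx =>
    ⟨hSpos x hx, (le_inv_smul_iff_of_pos hθ).2
      (le_add_of_nonneg_right (smul_nonneg hθ'.le (hS'pos x hx)))⟩
  exact hS.eq hf harch hsemi hwou hT ((one_le_inv₀ hθ).2 (by linarith)) heA hSe hTe

end Domination

theorem stmt_8_general
    {A B : Type*}
    [Ring A] [Lattice A] [Algebra ℝ A] [CovariantClass A A (· + ·) (· ≤ ·)]
    [Ring B] [Lattice B] [Algebra ℝ B] [CovariantClass B B (· + ·) (· ≤ ·)]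
    -- B is a Riesz space (vector lattice) over ℝ
    (hsmulB : ∀ (r : ℝ) (x : B), 0 ≤ r → 0 ≤ x → 0 ≤ r • x)
    -- B is a lattice-ordered algebra
    (hmulB : ∀ x y : B, 0 ≤ x → 0 ≤ y → 0 ≤ x * y)
    -- the f-algebra condition
    (hfB : ∀ x y z : B, 0 ≤ z → x ⊓ y = 0 → (x * z) ⊓ y = 0 ∧ (z * x) ⊓ y = 0)
    -- B is Archimedean
    (harchB : ∀ x y : B, (∀ n : ℕ, n • x ≤ y) → x ≤ 0)
    -- B is semiprime
    (hsemiB : ∀ x : B, x * x = 0 → x = 0)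
    (eA : A) (eB : B)
    -- eA is a weak order unit of A
    (heApos : 0 < eA)
    -- eB is a weak order unit of B
    (heBwou : ∀ x : B, |x| ⊓ eB = 0 → x = 0)
    (T : A →ₗ[ℝ] B)
    -- T is a weak Markov operator
    (hTe : T eA = eB)
    -- T is a lattice homomorphism
    (hlat : ∀ a : A, T |a| = |T a|) :
    T ∈ Set.extremePoints ℝ {S : A →ₗ[ℝ] B | (∀ a : A, 0 ≤ a → 0 ≤ S a) ∧ S eA = eB} := by
  have : IsOrderedAddMonoid A := { add_le_add_left := fun _ _ h c => add_le_add_left h c }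
  have : IsOrderedAddMonoid B := { add_le_add_left := fun _ _ h c => add_le_add_left h c }
  have : PosSMulMono ℝ B := .of_smul_nonneg fun r hr x hx => hsmulB r x hr hx
  have : PosMulMono B :=
    ⟨fun a ha b c h => sub_nonneg.1 (mul_sub a c b ▸ hmulB _ _ ha (sub_nonneg.2 h))⟩
  have : MulPosMono B :=
    ⟨fun a ha b c h => sub_nonneg.1 (sub_mul c b a ▸ hmulB _ _ (sub_nonneg.2 h) ha)⟩
  exact T.mem_extremePoints_of_map_abs hfB harchB hsemiB heBwou heApos.le hlat hTe

/-- If a weak Markov operator `T` between Archimedean semiprime `f`-algebras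
with point separating order duals and weak order units `e_A`, `e_B` is a
lattice homomorphism, then `T` is an extreme point of the set of all weak
Markov operators. -/
theorem stmt_8
    {A B : Type*}
    [Ring A] [Lattice A] [Algebra ℝ A] [CovariantClass A A (· + ·) (· ≤ ·)]
    -- A is a Riesz space (vector lattice) over ℝ
    (hsmulA : ∀ (r : ℝ) (x : A), 0 ≤ r → 0 ≤ x → 0 ≤ r • x)
    -- A is a lattice-ordered algebra
    (hmulA : ∀ x y : A, 0 ≤ x → 0 ≤ y → 0 ≤ x * y)
    -- the f-algebra condition
    (hfA : ∀ x y z : A, 0 ≤ z → x ⊓ y = 0 → (x * z) ⊓ y = 0 ∧ (z * x) ⊓ y = 0)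
    -- A is Archimedean
    (harchA : ∀ x y : A, (∀ n : ℕ, n • x ≤ y) → x ≤ 0)
    -- the order dual of A separates the points of A
    (hsepA : ∀ x : A, x ≠ 0 → ∃ f : A →ₗ[ℝ] ℝ, Monotone f ∧ f x ≠ 0)
    -- A is semiprime
    (hsemiA : ∀ x : A, x * x = 0 → x = 0)
    [Ring B] [Lattice B] [Algebra ℝ B] [CovariantClass B B (· + ·) (· ≤ ·)]
    -- B is a Riesz space (vector lattice) over ℝ
    (hsmulB : ∀ (r : ℝ) (x : B), 0 ≤ r → 0 ≤ x → 0 ≤ r • x)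
    -- B is a lattice-ordered algebra
    (hmulB : ∀ x y : B, 0 ≤ x → 0 ≤ y → 0 ≤ x * y)
    -- the f-algebra condition
    (hfB : ∀ x y z : B, 0 ≤ z → x ⊓ y = 0 → (x * z) ⊓ y = 0 ∧ (z * x) ⊓ y = 0)
    -- B is Archimedean
    (harchB : ∀ x y : B, (∀ n : ℕ, n • x ≤ y) → x ≤ 0)
    -- the order dual of B separates the points of B
    (hsepB : ∀ x : B, x ≠ 0 → ∃ f : B →ₗ[ℝ] ℝ, Monotone f ∧ f x ≠ 0)
    -- B is semiprime
    (hsemiB : ∀ x : B, x * x = 0 → x = 0)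
    (eA : A) (eB : B)
    -- eA is a weak order unit of A
    (heApos : 0 < eA) (heAwou : ∀ x : A, |x| ⊓ eA = 0 → x = 0)
    -- eB is a weak order unit of B
    (heBpos : 0 < eB) (heBwou : ∀ x : B, |x| ⊓ eB = 0 → x = 0)
    (T : A →ₗ[ℝ] B)
    -- T is a weak Markov operator
    (hTpos : ∀ a : A, 0 ≤ a → 0 ≤ T a) (hTe : T eA = eB)
    -- T is a lattice homomorphism
    (hlat : ∀ a : A, T |a| = |T a|) :
    T ∈ Set.extremePoints ℝ {S : A →ₗ[ℝ] B | (∀ a : A, 0 ≤ a → 0 ≤ S a) ∧ S eA = eB} :=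
  stmt_8_general hsmulB hmulB hfB harchB hsemiB eA eB heApos heBwou T hTe hlat
end

section
/- Let A and B be Archimedean semiprime f-algebras with point separating order duals, and let T : A → B be a positive linear operator. If there exist elements 0 ≤ a₀ ∈ A and 0 ≤ b₀ ∈ B such that T(a ∧ a₀) = T(a) ∧ b₀ for all a ∈ A, then T is a lattice homomorphism. -/
section AuxLemmas
variable {α : Type*} [AddCommGroup α] [Lattice α]
  [CovariantClass α α (· + ·) (· ≤ ·)]

private lemma aux_sup_eq (a b : α) : a ⊔ b = a + b - a ⊓ b := by
  rw [← inf_add_sup a b]; abel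

private lemma aux_posPart_sub (a b : α) : (a - b)⁺ = a ⊔ b - b := by
  rw [posPart_def, sup_sub, sub_self]

private lemma aux_sub_posPart (p q : α) (hpq : p ⊓ q = 0) : (p - q)⁺ = p := by
  rw [aux_posPart_sub, aux_sup_eq, hpq]; abel

private lemma aux_inf_add_eq_zero (p n c : α) (hn : 0 ≤ n) (hc : 0 ≤ c)
    (hp : 0 ≤ p) (h1 : p ⊓ n = 0) (h2 : p ⊓ c = 0) : p ⊓ (n + c) = 0 := by
  refine le_antisymm ?_ (le_inf hp (add_nonneg hn hc))
  set d := p ⊓ (n + c) with hd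
  have hdp : d - p ≤ 0 := sub_nonpos.2 inf_le_left
  have hdn : d - n ≤ 0 := by
    rw [← h2]
    exact le_inf (sub_le_iff_le_add.2 (inf_le_left.trans (le_add_of_nonneg_right hn)))
      (sub_le_iff_le_add.2 (inf_le_right.trans_eq (add_comm n c)))
  calc d = d - p ⊓ n := by rw [h1, sub_zero]
    _ = (d - p) ⊔ (d - n) := sub_inf p n d
    _ ≤ 0 := sup_le hdp hdn

end AuxLemmas

/-- A positive linear operator `T` between Archimedean semiprime `f`-algebras
with point separating order duals satisfying `T (a ⊓ a₀) = T a ⊓ b₀` for all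
`a`, for some fixed `0 ≤ a₀` and `0 ≤ b₀`, is a lattice homomorphism. -/
theorem stmt_9
    {A B : Type*}
    [Ring A] [Lattice A] [Algebra ℝ A] [CovariantClass A A (· + ·) (· ≤ ·)]
    -- A is a Riesz space (vector lattice) over ℝ
    (hsmulA : ∀ (r : ℝ) (x : A), 0 ≤ r → 0 ≤ x → 0 ≤ r • x)
    -- A is a lattice-ordered algebra
    (hmulA : ∀ x y : A, 0 ≤ x → 0 ≤ y → 0 ≤ x * y)
    -- the f-algebra condition
    (hfA : ∀ x y z : A, 0 ≤ z → x ⊓ y = 0 → (x * z) ⊓ y = 0 ∧ (z * x) ⊓ y = 0)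
    -- A is Archimedean
    (harchA : ∀ x y : A, (∀ n : ℕ, n • x ≤ y) → x ≤ 0)
    -- the order dual of A separates the points of A
    (hsepA : ∀ x : A, x ≠ 0 → ∃ f : A →ₗ[ℝ] ℝ, Monotone f ∧ f x ≠ 0)
    -- A is semiprime
    (hsemiA : ∀ x : A, x * x = 0 → x = 0)
    [Ring B] [Lattice B] [Algebra ℝ B] [CovariantClass B B (· + ·) (· ≤ ·)]
    -- B is a Riesz space (vector lattice) over ℝ
    (hsmulB : ∀ (r : ℝ) (x : B), 0 ≤ r → 0 ≤ x → 0 ≤ r • x)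
    -- B is a lattice-ordered algebra
    (hmulB : ∀ x y : B, 0 ≤ x → 0 ≤ y → 0 ≤ x * y)
    -- the f-algebra condition
    (hfB : ∀ x y z : B, 0 ≤ z → x ⊓ y = 0 → (x * z) ⊓ y = 0 ∧ (z * x) ⊓ y = 0)
    -- B is Archimedean
    (harchB : ∀ x y : B, (∀ n : ℕ, n • x ≤ y) → x ≤ 0)
    -- the order dual of B separates the points of B
    (hsepB : ∀ x : B, x ≠ 0 → ∃ f : B →ₗ[ℝ] ℝ, Monotone f ∧ f x ≠ 0)
    -- B is semiprime
    (hsemiB : ∀ x : B, x * x = 0 → x = 0)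
    (T : A →ₗ[ℝ] B)
    -- T is positive
    (hTpos : ∀ a : A, 0 ≤ a → 0 ≤ T a)
    (a₀ : A) (b₀ : B) (ha₀ : 0 ≤ a₀) (hb₀ : 0 ≤ b₀)
    (hmin : ∀ a : A, T (a ⊓ a₀) = T a ⊓ b₀) :
    ∀ a : A, T |a| = |T a| := by
  -- Step 1: `T a₀ ≤ b₀`; set `c := b₀ - T a₀ ≥ 0`.
  have hTa0 : T a₀ ≤ b₀ := by
    have h := hmin a₀
    rw [inf_idem] at h
    rw [h]; exact inf_le_right
  set c : B := b₀ - T a₀ with hcdef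
  have hc0 : 0 ≤ c := sub_nonneg.2 hTa0
  -- Step 2: key identity `T (x⁺) = (T x - c)⁺`.
  have key : ∀ x : A, T (x⁺) = (T x - c)⁺ := by
    intro x
    have h := hmin (x + a₀)
    have h1 : x⁺ = x + a₀ - (x + a₀) ⊓ a₀ := by
      have h0 : (x + a₀) ⊓ a₀ = x ⊓ 0 + a₀ := by rw [inf_add, zero_add]
      rw [h0, posPart_def, aux_sup_eq x 0]; abel
    have h2 : (T x - c)⁺ = T x + T a₀ - (T x + T a₀) ⊓ b₀ := by
      have h0 : T x - c = T x + T a₀ - b₀ := by rw [hcdef]; abel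
      rw [h0, aux_posPart_sub, aux_sup_eq (T x + T a₀) b₀]; abel
    rw [h1, map_sub, map_add, h, h2, map_add]
  -- Step 3: for `0 ≤ x`, `T x ⊓ c = 0`.
  have disj : ∀ x : A, 0 ≤ x → T x ⊓ c = 0 := by
    intro x hx
    have h := key x
    rw [posPart_eq_self.2 hx] at h
    rw [aux_posPart_sub] at h
    -- h : T x = T x ⊔ c - c
    have hsup : T x ⊔ c = T x + c := sub_eq_iff_eq_add.mp h.symm
    have h4 := inf_add_sup (T x) c
    calc T x ⊓ c = T x ⊓ c + (T x ⊔ c) - (T x + c) := by rw [hsup]; abel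
      _ = (T x + c) - (T x + c) := by rw [h4]
      _ = 0 := sub_self _
  -- Step 4: `T (x⁺) = (T x)⁺` for all `x`.
  have key2 : ∀ x : A, T (x⁺) = (T x)⁺ := by
    intro x
    have habs : |T x| ≤ T |x| := by
      have h1 : T x = T (x⁺) - T (x⁻) := by
        rw [← map_sub, posPart_sub_negPart]
      have h2 : |T x| ≤ T (x⁺) + T (x⁻) := by
        rw [h1, sub_eq_add_neg]
        refine abs_le'.2 ⟨?_, ?_⟩
        · exact add_le_add le_rfl (neg_le_self (hTpos _ (negPart_nonneg x)))
        · rw [neg_add, neg_neg]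
          exact add_le_add (neg_le_self (hTpos _ (posPart_nonneg x))) le_rfl
      calc |T x| ≤ T (x⁺) + T (x⁻) := h2
        _ = T (x⁺ + x⁻) := (map_add T _ _).symm
        _ = T |x| := by rw [posPart_add_negPart]
    have habsc : |T x| ⊓ c = 0 := by
      refine le_antisymm ?_ (le_inf (abs_nonneg _) hc0)
      calc |T x| ⊓ c ≤ T |x| ⊓ c := inf_le_inf_right c habs
        _ = 0 := disj |x| (abs_nonneg x)
    have hple : (T x)⁺ ≤ |T x| := by
      rw [posPart_def]; exact sup_le (le_abs_self _) (abs_nonneg _)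
    have hnle : (T x)⁻ ≤ |T x| := by
      rw [negPart_def]; exact sup_le (neg_le_abs _) (abs_nonneg _)
    have hpc : (T x)⁺ ⊓ c = 0 := by
      refine le_antisymm ?_ (le_inf (posPart_nonneg _) hc0)
      calc (T x)⁺ ⊓ c ≤ |T x| ⊓ c := inf_le_inf_right c hple
        _ = 0 := habsc
    have hdisj : (T x)⁺ ⊓ ((T x)⁻ + c) = 0 :=
      aux_inf_add_eq_zero _ _ _ (negPart_nonneg _) hc0 (posPart_nonneg _)
        (posPart_inf_negPart_eq_zero _) hpc
    have hrw : T x - c = (T x)⁺ - ((T x)⁻ + c) := by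
      nth_rewrite 1 [← posPart_sub_negPart (T x)]; abel
    rw [key x, hrw, aux_sub_posPart _ _ hdisj]
  -- Conclusion
  intro a
  have h2 : T (a⁻) = (T a)⁻ := by
    rw [← posPart_neg a, key2 (-a), map_neg, posPart_neg]
  calc T |a| = T (a⁺ + a⁻) := by rw [posPart_add_negPart]
    _ = T (a⁺) + T (a⁻) := map_add T _ _
    _ = (T a)⁺ + (T a)⁻ := by rw [key2 a, h2]
    _ = |T a| := posPart_add_negPart _
end

section
/- Let A and B be Archimedean semiprime f-algebras with point separating order duals and with weak order units e_A and e_B respectively, and let T : A → B be a weak Markov operator. If there exist elements 0 ≤ a₀ ∈ A and 0 ≤ b₀ ∈ B such that T(a ∧ a₀) = T(a) ∧ b₀ for all a ∈ A, then T is an extreme point of the convex set of all weak Markov operators from A to B. -/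
/-!
Write `T = θ • S₁ + β • S₂` with `S₁, S₂` weak Markov operators and `0 < θ`. Applied to `a₀` and
`a₀ + e_A`, the hypothesis on `a₀, b₀` gives `T a₀ = b₀`, and translating by `a₀` then shows that
`T` preserves `⊓`. The operator `D = θ • (S₁ - T)` satisfies `|D x| ≤ T x` for `x ≥ 0` and
`D e_A = 0`. Slice `0 ≤ c ≤ M • e_A` into the layers `c ⊓ (k + 1) • e_A - c ⊓ k • e_A`: their images
under `|D|` are pairwise disjoint (since `T` preserves disjointness) and bounded by `e_B`, so
`|D c| ≤ e_B`. Applied to `n • c` for all `n`, the Archimedean property gives `D c = 0`. For an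
arbitrary `a ≥ 0` this yields `|D a| ≤ (T a - K • e_B)⁺` for every `K`, which forces
`|D a| ⊓ e_B = 0`, so `D a = 0` because `e_B` is a weak order unit. Hence `S₁ = T`.
-/

section LatticeOrderedGroup

variable {V : Type*} [AddCommGroup V] [Lattice V]

def nsmulLayer (c e : V) (k : ℕ) : V := c ⊓ ((k + 1) • e) - c ⊓ (k • e)

lemma sum_range_nsmulLayer {c e : V} (hc : 0 ≤ c) {M : ℕ} (hcM : c ≤ M • e) :
    ∑ k ∈ Finset.range M, nsmulLayer c e k = c := by
  unfold nsmulLayer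
  rw [Finset.sum_range_sub (fun k : ℕ => c ⊓ (k • e)), zero_nsmul, inf_of_le_right hc,
    inf_of_le_left hcM, sub_zero]

variable [IsOrderedAddMonoid V]

lemma sub_inf_self_eq_posPart (a b : V) : a - a ⊓ b = (a - b)⁺ := by
  rw [inf_eq_sub_posPart_sub, sub_sub_cancel]

lemma inf_eq_sub_add_inf_add_sub (x y z : V) : x ⊓ y = (x - y + z) ⊓ z + (y - z) := by
  rw [inf_add]; congr 1 <;> abel

lemma add_inf_eq_zero {p q r : V} (hp : 0 ≤ p) (hq : 0 ≤ q) (hr : 0 ≤ r)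
    (hpr : p ⊓ r = 0) (hqr : q ⊓ r = 0) : (p + q) ⊓ r = 0 := by
  have hle : (p + q) ⊓ r ≤ q :=
    calc (p + q) ⊓ r ≤ (p + q) ⊓ (r + q) := inf_le_inf_left _ (le_add_of_nonneg_right hq)
      _ = q := by rw [← inf_add, hpr, zero_add]
  exact le_antisymm (hqr ▸ le_inf hle inf_le_right) (le_inf (add_nonneg hp hq) hr)

lemma Finset.sum_inf_eq_zero {ι : Type*} {s : Finset ι} {f : ι → V} {r : V}
    (hf : ∀ i ∈ s, 0 ≤ f i) (hr : 0 ≤ r) (hfr : ∀ i ∈ s, f i ⊓ r = 0) :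
    (∑ i ∈ s, f i) ⊓ r = 0 :=
  (Finset.sum_induction f (fun x => 0 ≤ x ∧ x ⊓ r = 0)
    (fun _ _ ha hb => ⟨add_nonneg ha.1 hb.1, add_inf_eq_zero ha.1 hb.1 hr ha.2 hb.2⟩)
    ⟨le_rfl, inf_eq_left.mpr hr⟩ fun i hi => ⟨hf i hi, hfr i hi⟩).2

lemma Finset.sum_le_of_pairwise_inf_eq_zero {ι : Type*} [DecidableEq ι] {s : Finset ι}
    {f : ι → V} {c : V} (hc : 0 ≤ c) (hf : ∀ i ∈ s, 0 ≤ f i) (hfc : ∀ i ∈ s, f i ≤ c)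
    (hdisj : (s : Set ι).Pairwise fun i j => f i ⊓ f j = 0) : ∑ i ∈ s, f i ≤ c := by
  induction s using Finset.induction_on with
  | empty => simpa using hc
  | insert a s ha ih =>
    rw [Finset.coe_insert, Set.pairwise_insert] at hdisj
    simp only [Finset.mem_insert, forall_eq_or_imp] at hf hfc
    have hsum : (∑ i ∈ s, f i) ⊓ f a = 0 :=
      Finset.sum_inf_eq_zero hf.2 hf.1 fun i hi => (hdisj.2 i hi (ne_of_mem_of_not_mem hi ha).symm).2
    rw [Finset.sum_insert ha, add_comm, ← inf_add_sup, hsum, zero_add]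
    exact sup_le (ih hf.2 hfc.2 hdisj.1) hfc.1

lemma nsmulLayer_nonneg (c : V) {e : V} (he : 0 ≤ e) (k : ℕ) : 0 ≤ nsmulLayer c e k :=
  sub_nonneg.mpr (inf_le_inf_left c (nsmul_le_nsmul_left he k.le_succ))

lemma nsmulLayer_le (c : V) {e : V} (he : 0 ≤ e) (k : ℕ) : nsmulLayer c e k ≤ e := by
  rw [nsmulLayer, sub_le_iff_le_add', inf_add, succ_nsmul]
  exact inf_le_inf_right _ (le_add_of_nonneg_right he)

lemma sub_nsmulLayer_inf_nsmulLayer (c : V) {e : V} (he : 0 ≤ e) {j k : ℕ} (hjk : j < k) :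
    (e - nsmulLayer c e j) ⊓ nsmulLayer c e k = 0 := by
  have hleft : e - nsmulLayer c e j ≤ ((j + 1) • e - c)⁺ := by
    have : e - nsmulLayer c e j = ((j + 1) • e - c)⁺ - (j • e - c)⁺ := by
      rw [← sub_inf_self_eq_posPart, ← sub_inf_self_eq_posPart, inf_comm _ c, inf_comm _ c,
        nsmulLayer, succ_nsmul]
      abel
    exact this ▸ sub_le_self _ (posPart_nonneg _)
  have hright : nsmulLayer c e k ≤ ((j + 1) • e - c)⁻ :=
    calc nsmulLayer c e k ≤ c - c ⊓ (k • e) := sub_le_sub_right inf_le_left _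
      _ = (c - k • e)⁺ := sub_inf_self_eq_posPart c _
      _ ≤ (c - (j + 1) • e)⁺ := posPart_mono (sub_le_sub_left (nsmul_le_nsmul_left he hjk) c)
      _ = ((j + 1) • e - c)⁻ := by rw [← posPart_neg, neg_sub]
  refine le_antisymm ?_ (le_inf (sub_nonneg.mpr (nsmulLayer_le c he j)) (nsmulLayer_nonneg c he k))
  exact posPart_inf_negPart_eq_zero ((j + 1) • e - c) ▸ inf_le_inf hleft hright

lemma inf_eq_zero_of_le_posPart_sub_nsmul (harch : ∀ x y : V, (∀ n : ℕ, n • x ≤ y) → x ≤ 0)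
    {x c e : V} (hx : 0 ≤ x) (hc : 0 ≤ c) (he : 0 ≤ e) (h : ∀ K : ℕ, x ≤ (c - K • e)⁺) :
    x ⊓ e = 0 := by
  set d := x ⊓ e
  have hd : ∀ m : ℕ, m • d ≤ c ⊓ (m • e) := by
    intro m
    induction m with
    | zero => simpa using hc
    | succ m ih =>
      have hdc : c ⊓ (m • e) + d ≤ c := by
        rw [← le_sub_iff_add_le', sub_inf_self_eq_posPart]
        exact inf_le_left.trans (h m)
      rw [succ_nsmul, succ_nsmul]
      exact le_inf ((add_le_add_left ih d).trans hdc)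
        (add_le_add (ih.trans inf_le_right) inf_le_right)
  exact le_antisymm (harch d c fun m => (hd m).trans inf_le_left) (le_inf hx he)

lemma abs_smul_sub_le [Module ℝ V] [PosSMulMono ℝ V] {θ β : ℝ} (hθ : 0 ≤ θ) (hβ : 0 ≤ β)
    (hθβ : θ + β = 1) {s₁ s₂ t : V} (hs₁ : 0 ≤ s₁) (hs₂ : 0 ≤ s₂) (ht : θ • s₁ + β • s₂ = t) :
    |θ • (s₁ - t)| ≤ t := by
  have ht₀ : 0 ≤ t := ht ▸ add_nonneg (smul_nonneg hθ hs₁) (smul_nonneg hβ hs₂)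
  have hθs₁ : θ • s₁ ≤ t := ht ▸ le_add_of_nonneg_right (smul_nonneg hβ hs₂)
  have hθt : θ • t ≤ t :=
    calc θ • t ≤ θ • t + β • t := le_add_of_nonneg_right (smul_nonneg hβ ht₀)
      _ = t := by rw [← add_smul, hθβ, one_smul]
  rw [abs_le', smul_sub, neg_sub]
  exact ⟨(sub_le_self _ (smul_nonneg hθ ht₀)).trans hθs₁,
    (sub_le_self _ (smul_nonneg hθ hs₁)).trans hθt⟩

end LatticeOrderedGroup

section Operators

variable {V W F : Type*} [AddCommGroup V] [Lattice V] [IsOrderedAddMonoid V]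
  [AddCommGroup W] [Lattice W] [IsOrderedAddMonoid W] [FunLike F V W] [AddMonoidHomClass F V W]

lemma map_inf_of_map_inf_const {T : F} {a₀ : V} (hT : ∀ x, T (x ⊓ a₀) = T x ⊓ T a₀) (x y : V) :
    T (x ⊓ y) = T x ⊓ T y := by
  rw [inf_eq_sub_add_inf_add_sub x y a₀, map_add, hT, map_sub, map_add, map_sub]
  exact (inf_eq_sub_add_inf_add_sub _ _ _).symm

lemma map_eq_of_map_inf_eq {T : F} {a₀ e : V} {b₀ : W} (he : 0 ≤ e)
    (hwou : ∀ y : W, |y| ⊓ T e = 0 → y = 0) (hT : ∀ x, T (x ⊓ a₀) = T x ⊓ b₀) : T a₀ = b₀ := by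
  have hle : T a₀ ≤ b₀ := by
    have := hT a₀
    rw [inf_idem] at this
    exact this ▸ inf_le_right
  have hdisj : (b₀ - T a₀) ⊓ T e = 0 := by
    have h := hT (a₀ + e)
    rw [inf_eq_right.mpr (le_add_of_nonneg_right he), map_add] at h
    calc (b₀ - T a₀) ⊓ T e = b₀ ⊓ (T a₀ + T e) - T a₀ := by rw [inf_sub, add_sub_cancel_left]
      _ = 0 := by rw [inf_comm, ← h, sub_self]
  exact (sub_eq_zero.mp (hwou _ (by rwa [abs_of_nonneg (sub_nonneg.mpr hle)]))).symm

lemma abs_map_le_of_le_nsmul {T D : F} (hT : ∀ x y, T (x ⊓ y) = T x ⊓ T y)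
    (hD : ∀ x, 0 ≤ x → |D x| ≤ T x) {e : V} (he : 0 ≤ e) (hDe : D e = 0) {c : V} (hc : 0 ≤ c)
    {M : ℕ} (hcM : c ≤ M • e) : |D c| ≤ T e := by
  have hTmono : Monotone T := Monotone.of_map_inf hT
  have hlayer : ∀ k, |D (nsmulLayer c e k)| ≤ T (nsmulLayer c e k) :=
    fun k => hD _ (nsmulLayer_nonneg c he k)
  have hlayer' : ∀ k, |D (nsmulLayer c e k)| ≤ T (e - nsmulLayer c e k) := fun k => by
    simpa [hDe] using hD _ (sub_nonneg.mpr (nsmulLayer_le c he k))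
  have hdisj : ∀ j k, j < k → |D (nsmulLayer c e j)| ⊓ |D (nsmulLayer c e k)| = 0 :=
    fun j k hjk => le_antisymm
      (calc |D (nsmulLayer c e j)| ⊓ |D (nsmulLayer c e k)|
          ≤ T (e - nsmulLayer c e j) ⊓ T (nsmulLayer c e k) := inf_le_inf (hlayer' j) (hlayer k)
        _ = 0 := by rw [← hT, sub_nsmulLayer_inf_nsmulLayer c he hjk, map_zero])
      (le_inf (abs_nonneg _) (abs_nonneg _))
  calc |D c| = |∑ k ∈ Finset.range M, D (nsmulLayer c e k)| := by
        rw [← map_sum, sum_range_nsmulLayer hc hcM]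
    _ ≤ ∑ k ∈ Finset.range M, |D (nsmulLayer c e k)| :=
        Finset.le_sum_of_subadditive _ abs_zero.le abs_add_le _ _
    _ ≤ T e := by
      refine Finset.sum_le_of_pairwise_inf_eq_zero (by simpa using hTmono he)
        (fun k _ => abs_nonneg _) (fun k _ => (hlayer k).trans (hTmono (nsmulLayer_le c he k))) ?_
      intro j _ k _ hjk
      rcases hjk.lt_or_gt with h | h
      · exact hdisj j k h
      · exact (inf_comm _ _).trans (hdisj k j h)

lemma map_eq_zero_of_le_nsmul (harch : ∀ x y : W, (∀ n : ℕ, n • x ≤ y) → x ≤ 0) {T D : F}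
    (hT : ∀ x y, T (x ⊓ y) = T x ⊓ T y) (hD : ∀ x, 0 ≤ x → |D x| ≤ T x) {e : V} (he : 0 ≤ e)
    (hDe : D e = 0) {b : V} (hb : 0 ≤ b) {K : ℕ} (hbK : b ≤ K • e) : D b = 0 := by
  have h : ∀ n : ℕ, |n • D b| ≤ T e := fun n => by
    rw [← map_nsmul]
    refine abs_map_le_of_le_nsmul hT hD he hDe (nsmul_nonneg hb n) (M := n * K) ?_
    rw [mul_nsmul']
    exact nsmul_le_nsmul_right hbK n
  refine le_antisymm (harch _ _ fun n => (le_abs_self _).trans (h n)) (neg_nonpos.mp ?_)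
  exact harch _ _ fun n => by rw [smul_neg]; exact (neg_le_abs _).trans (h n)

theorem eq_zero_of_abs_map_le (harch : ∀ x y : W, (∀ n : ℕ, n • x ≤ y) → x ≤ 0) {T D : F}
    {e : V} (hwou : ∀ y : W, |y| ⊓ T e = 0 → y = 0) (hT : ∀ x y, T (x ⊓ y) = T x ⊓ T y)
    (hD : ∀ x, 0 ≤ x → |D x| ≤ T x) (he : 0 ≤ e) (hDe : D e = 0) (x : V) : D x = 0 := by
  have hTmono : Monotone T := Monotone.of_map_inf hT
  suffices hpos : ∀ a, 0 ≤ a → D a = 0 by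
    rw [← posPart_sub_negPart x, map_sub, hpos _ (posPart_nonneg x), hpos _ (negPart_nonneg x),
      sub_zero]
  intro a ha
  have hK : ∀ K : ℕ, |D a| ≤ (T a - K • T e)⁺ := fun K =>
    calc |D a| = |D (a - a ⊓ (K • e))| := by
          rw [map_sub, map_eq_zero_of_le_nsmul harch hT hD he hDe (le_inf ha (nsmul_nonneg he K))
            inf_le_right, sub_zero]
      _ ≤ T (a - a ⊓ (K • e)) := hD _ (sub_nonneg.mpr inf_le_left)
      _ = (T a - K • T e)⁺ := by rw [map_sub, hT, map_nsmul, sub_inf_self_eq_posPart]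
  exact hwou _ (inf_eq_zero_of_le_posPart_sub_nsmul harch (abs_nonneg _)
    (by simpa using hTmono ha) (by simpa using hTmono he) hK)

end Operators

theorem stmt_10_general
    {A B : Type*}
    [Ring A] [Lattice A] [Algebra ℝ A] [CovariantClass A A (· + ·) (· ≤ ·)]
    [Ring B] [Lattice B] [Algebra ℝ B] [CovariantClass B B (· + ·) (· ≤ ·)]
    -- B is a Riesz space (vector lattice) over ℝ
    (hsmulB : ∀ (r : ℝ) (x : B), 0 ≤ r → 0 ≤ x → 0 ≤ r • x)
    -- B is Archimedean
    (harchB : ∀ x y : B, (∀ n : ℕ, n • x ≤ y) → x ≤ 0)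
    (eA : A) (eB : B)
    -- eA is a weak order unit of A
    (heApos : 0 < eA)
    -- eB is a weak order unit of B
    (heBwou : ∀ x : B, |x| ⊓ eB = 0 → x = 0)
    (T : A →ₗ[ℝ] B)
    -- T is a weak Markov operator
    (hTpos : ∀ a : A, 0 ≤ a → 0 ≤ T a) (hTe : T eA = eB)
    (a₀ : A) (b₀ : B)
    (hmin : ∀ a : A, T (a ⊓ a₀) = T a ⊓ b₀) :
    T ∈ Set.extremePoints ℝ {S : A →ₗ[ℝ] B | (∀ a : A, 0 ≤ a → 0 ≤ S a) ∧ S eA = eB} := by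
  have : IsOrderedAddMonoid A := { add_le_add_left := fun _ _ h c => add_le_add_left h c }
  have : IsOrderedAddMonoid B := { add_le_add_left := fun _ _ h c => add_le_add_left h c }
  have : PosSMulMono ℝ B := .of_smul_nonneg fun r hr x hx => hsmulB r x hr hx
  refine ⟨⟨hTpos, hTe⟩, ?_⟩
  rintro S₁ ⟨hS₁pos, hS₁e⟩ S₂ ⟨hS₂pos, -⟩ ⟨θ, β, hθ, hβ, hθβ, hsum⟩
  have hwou : ∀ y : B, |y| ⊓ T eA = 0 → y = 0 := by rwa [hTe]
  have hTinf : ∀ x y, T (x ⊓ y) = T x ⊓ T y :=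
    map_inf_of_map_inf_const fun x => by rw [hmin, map_eq_of_map_inf_eq heApos.le hwou hmin]
  have hD : θ • (S₁ - T) = 0 := LinearMap.ext <| eq_zero_of_abs_map_le harchB hwou hTinf
    (fun x hx => abs_smul_sub_le hθ.le hβ.le hθβ (hS₁pos x hx) (hS₂pos x hx)
      (by rw [← hsum]; rfl))
    heApos.le (by simp [hS₁e, hTe])
  exact sub_eq_zero.mp ((smul_eq_zero.mp hD).resolve_left hθ.ne')

/-- If a weak Markov operator `T` between Archimedean semiprime `f`-algebras
with point separating order duals and weak order units `e_A`, `e_B` satisfies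
`T (a ⊓ a₀) = T a ⊓ b₀` for all `a`, for some fixed `0 ≤ a₀` and `0 ≤ b₀`,
then `T` is an extreme point of the set of all weak Markov operators. -/
theorem stmt_10
    {A B : Type*}
    [Ring A] [Lattice A] [Algebra ℝ A] [CovariantClass A A (· + ·) (· ≤ ·)]
    -- A is a Riesz space (vector lattice) over ℝ
    (hsmulA : ∀ (r : ℝ) (x : A), 0 ≤ r → 0 ≤ x → 0 ≤ r • x)
    -- A is a lattice-ordered algebra
    (hmulA : ∀ x y : A, 0 ≤ x → 0 ≤ y → 0 ≤ x * y)
    -- the f-algebra condition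
    (hfA : ∀ x y z : A, 0 ≤ z → x ⊓ y = 0 → (x * z) ⊓ y = 0 ∧ (z * x) ⊓ y = 0)
    -- A is Archimedean
    (harchA : ∀ x y : A, (∀ n : ℕ, n • x ≤ y) → x ≤ 0)
    -- the order dual of A separates the points of A
    (hsepA : ∀ x : A, x ≠ 0 → ∃ f : A →ₗ[ℝ] ℝ, Monotone f ∧ f x ≠ 0)
    -- A is semiprime
    (hsemiA : ∀ x : A, x * x = 0 → x = 0)
    [Ring B] [Lattice B] [Algebra ℝ B] [CovariantClass B B (· + ·) (· ≤ ·)]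
    -- B is a Riesz space (vector lattice) over ℝ
    (hsmulB : ∀ (r : ℝ) (x : B), 0 ≤ r → 0 ≤ x → 0 ≤ r • x)
    -- B is a lattice-ordered algebra
    (hmulB : ∀ x y : B, 0 ≤ x → 0 ≤ y → 0 ≤ x * y)
    -- the f-algebra condition
    (hfB : ∀ x y z : B, 0 ≤ z → x ⊓ y = 0 → (x * z) ⊓ y = 0 ∧ (z * x) ⊓ y = 0)
    -- B is Archimedean
    (harchB : ∀ x y : B, (∀ n : ℕ, n • x ≤ y) → x ≤ 0)
    -- the order dual of B separates the points of B
    (hsepB : ∀ x : B, x ≠ 0 → ∃ f : B →ₗ[ℝ] ℝ, Monotone f ∧ f x ≠ 0)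
    -- B is semiprime
    (hsemiB : ∀ x : B, x * x = 0 → x = 0)
    (eA : A) (eB : B)
    -- eA is a weak order unit of A
    (heApos : 0 < eA) (heAwou : ∀ x : A, |x| ⊓ eA = 0 → x = 0)
    -- eB is a weak order unit of B
    (heBpos : 0 < eB) (heBwou : ∀ x : B, |x| ⊓ eB = 0 → x = 0)
    (T : A →ₗ[ℝ] B)
    -- T is a weak Markov operator
    (hTpos : ∀ a : A, 0 ≤ a → 0 ≤ T a) (hTe : T eA = eB)
    (a₀ : A) (b₀ : B) (ha₀ : 0 ≤ a₀) (hb₀ : 0 ≤ b₀)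
    (hmin : ∀ a : A, T (a ⊓ a₀) = T a ⊓ b₀) :
    T ∈ Set.extremePoints ℝ {S : A →ₗ[ℝ] B | (∀ a : A, 0 ≤ a → 0 ≤ S a) ∧ S eA = eB} :=
  stmt_10_general hsmulB harchB eA eB heApos heBwou T hTpos hTe a₀ b₀ hmin
end
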